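/- arXiv:2011.09317 — 6 statements merged into one kernel-verified Lean document; each statement's English description precedes it below -/
import Mathlib

section
/- (Lemma 1, conditional form with an adaptive proposal.) Let ρ be a probability measure on (ℝ^d)^J (the law of the previous particle vector), let W_1,…,W_J : (ℝ^d)^J → [0,∞) be measurable with Σ_{j=1}^J W_j(z) = 1 for every z, let g : ℝ^d → [0,∞) be measurable and bounded, and let f : ℝ^d × ℝ^d → [0,∞) be measurable with ∫_{ℝ^d} f(x, z) dx = 1 for every z ∈ ℝ^d. Let Ψ : (ℝ^d)^J × ℝ^d → [0,∞) be jointly measurable such that for every z ∈ (ℝ^d)^J the function Ψ(z, ·) is a pdf satisfying Ψ(z, x) > 0 for Lebesgue-a.e. x with g(x)·Σ_{j=1}^J W_j(z) f(x, z_j) > 0. Let κ be a Markov kernel from (ℝ^d)^J to (ℝ^d)^M such that κ(z) is the M-fold product of the measure with density Ψ(z, ·), and let μ := ρ ⊗ κ be the induced joint probability measure on (ℝ^d)^J × (ℝ^d)^M. Define F(z, x_1,…,x_M) := (1/M)·Σ_{m=1}^M g(x_m)·(Σ_{j=1}^J W_j(z) f(x_m, z_j)) / Ψ(z, x_m) (with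 quotient 0 when the denominator is 0). Then the conditional expectation of F with respect to the σ-algebra generated by the first coordinate satisfies, μ-a.e., E[F | σ(fst)](z, x) = Σ_{j=1}^J W_j(z) ∫_{ℝ^d} g(x') f(x', z_j) dx'. -/
open MeasureTheory ProbabilityTheory

/-- Marginal of a finite product of probability measures: pushing forward along
evaluation at a coordinate recovers that coordinate's measure. -/
lemma map_eval_pi_prob {ι : Type*} [Fintype ι] {α : ι → Type*} [∀ i, MeasurableSpace (α i)]
    (μ : ∀ i, Measure (α i)) [∀ i, IsProbabilityMeasure (μ i)] (i : ι) :
    (Measure.pi μ).map (Function.eval i) = μ i := by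
  classical
  ext s hs
  rw [Measure.map_apply (measurable_pi_apply i) hs, Set.eval_preimage, Measure.pi_pi]
  rw [Fintype.prod_eq_single i (fun j hj => by simp [Function.update_of_ne hj])]
  simp

/-- A nonnegative measurable function whose Bochner integral is 1 is integrable. -/
lemma oapf_aux_integrable_of_integral_eq_one {α : Type*} [MeasurableSpace α] {μ : Measure α}
    {f : α → ℝ} (hf : ∫ x, f x ∂μ = 1) : Integrable f μ := by
  by_contra h
  rw [integral_undef h] at hf
  norm_num at hf

set_option maxHeartbeats 1000000 in
/-- **Lemma 1 (conditional form with an adaptive proposal).**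
With previous particle vector `z` distributed according to `ρ`, normalized weights
`W j z`, bounded likelihood `g`, transition density `f`, adaptive proposal density
`Ψ z`, and the new particles conditionally i.i.d. from `Ψ z` (kernel `κ`, joint law
`μ = ρ ⊗ₘ κ`), the conditional expectation of the per-step OAPF estimator
`F(z, x) = (1/M) ∑ₘ g(xₘ)·(∑ⱼ W j z · f (xₘ) (z j)) / Ψ z (xₘ)`
given the first coordinate is `∑ⱼ W j z ∫ g(x') f(x', zⱼ) dx'`, `μ`-a.e. -/
theorem oapf_one_step_unbiased_conditional
    (d J M : ℕ) (hd : 1 ≤ d) (hJ : 1 ≤ J) (hM : 1 ≤ M)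
    (ρ : Measure (Fin J → (Fin d → ℝ))) [IsProbabilityMeasure ρ]
    (W : Fin J → (Fin J → (Fin d → ℝ)) → ℝ)
    (hW_meas : ∀ j, Measurable (W j)) (hW_nonneg : ∀ j z, 0 ≤ W j z)
    (hW_sum : ∀ z, ∑ j, W j z = 1)
    (g : (Fin d → ℝ) → ℝ) (hg_meas : Measurable g) (hg_nonneg : ∀ x, 0 ≤ g x)
    (hg_bdd : ∃ C : ℝ, ∀ x, g x ≤ C)
    (f : (Fin d → ℝ) → (Fin d → ℝ) → ℝ)
    (hf_meas : Measurable (Function.uncurry f))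
    (hf_nonneg : ∀ x z, 0 ≤ f x z) (hf_int : ∀ z, ∫ x, f x z = 1)
    (Ψ : (Fin J → (Fin d → ℝ)) → (Fin d → ℝ) → ℝ)
    (hΨ_meas : Measurable (Function.uncurry Ψ))
    (hΨ_nonneg : ∀ z x, 0 ≤ Ψ z x) (hΨ_int : ∀ z, ∫ x, Ψ z x = 1)
    (hΨ_supp : ∀ z, ∀ᵐ x,
      0 < g x * ∑ j, W j z * f x (z j) → 0 < Ψ z x)
    (κ : Kernel (Fin J → (Fin d → ℝ)) (Fin M → (Fin d → ℝ))) [IsMarkovKernel κ]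
    (hκ : ∀ z, κ z = Measure.pi
      (fun _ : Fin M => volume.withDensity (fun x => ENNReal.ofReal (Ψ z x))))
    (μ : Measure ((Fin J → (Fin d → ℝ)) × (Fin M → (Fin d → ℝ))))
    (hμ : μ = ρ.compProd κ)
    (F : (Fin J → (Fin d → ℝ)) × (Fin M → (Fin d → ℝ)) → ℝ)
    (hF : F = fun p => (M : ℝ)⁻¹ *
      ∑ m, g (p.2 m) * (∑ j, W j p.1 * f (p.2 m) (p.1 j)) / Ψ p.1 (p.2 m)) :
    μ[F | MeasurableSpace.comap Prod.fst inferInstance]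
      =ᵐ[μ] fun p => ∑ j, W j p.1 * ∫ x, g x * f x (p.1 j) := by
  classical
  subst hμ
  obtain ⟨C, hC⟩ := hg_bdd
  -- basic measurability / integrability facts
  have hfx : ∀ w, Measurable fun x => f x w := fun w =>
    hf_meas.comp (measurable_id.prodMk measurable_const)
  have hfint : ∀ w, Integrable (fun x => f x w) := fun w =>
    oapf_aux_integrable_of_integral_eq_one (hf_int w)
  have hgf_int : ∀ w, Integrable (fun x => g x * f x w) := by
    intro w
    refine Integrable.mono' ((hfint w).const_mul C)
      ((hg_meas.mul (hfx w)).aestronglyMeasurable) (ae_of_all _ fun x => ?_)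
    rw [Real.norm_eq_abs, abs_of_nonneg (mul_nonneg (hg_nonneg x) (hf_nonneg x w))]
    exact mul_le_mul_of_nonneg_right (hC x) (hf_nonneg x w)
  set G : (Fin d → ℝ) → ℝ := fun w => ∫ x, g x * f x w with hGdef
  have hG_meas : Measurable G := by
    have hsm : StronglyMeasurable
        (fun q : (Fin d → ℝ) × (Fin d → ℝ) => g q.2 * f q.2 q.1) :=
      ((hg_meas.comp measurable_snd).mul
        (hf_meas.comp (measurable_snd.prodMk measurable_fst))).stronglyMeasurable
    exact hsm.integral_prod_right'.measurable
  have hG_nonneg : ∀ w, 0 ≤ G w := fun w =>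
    integral_nonneg fun x => mul_nonneg (hg_nonneg x) (hf_nonneg x w)
  have hG_le : ∀ w, G w ≤ C := by
    intro w
    calc G w ≤ ∫ x, C * f x w :=
          integral_mono (hgf_int w) ((hfint w).const_mul C)
            (fun x => mul_le_mul_of_nonneg_right (hC x) (hf_nonneg x w))
      _ = C := by rw [integral_const_mul, hf_int w, mul_one]
  set h : (Fin J → Fin d → ℝ) → ℝ := fun z => ∑ j, W j z * G (z j) with hhdef
  have hh_meas : Measurable h :=
    Finset.measurable_sum _ fun j _ => (hW_meas j).mul (hG_meas.comp (measurable_pi_apply j))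
  have hh_nonneg : ∀ z, 0 ≤ h z := fun z =>
    Finset.sum_nonneg fun j _ => mul_nonneg (hW_nonneg j z) (hG_nonneg (z j))
  have hh_le : ∀ z, h z ≤ C := by
    intro z
    calc h z ≤ ∑ j, W j z * C :=
          Finset.sum_le_sum fun j _ =>
            mul_le_mul_of_nonneg_left (hG_le (z j)) (hW_nonneg j z)
      _ = C := by rw [← Finset.sum_mul, hW_sum, one_mul]
  -- the integrand on the second coordinate
  set φ : (Fin J → Fin d → ℝ) → (Fin d → ℝ) → ℝ :=
    fun z x => g x * (∑ j, W j z * f x (z j)) / Ψ z x with hφdef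
  have hΨz_meas : ∀ z, Measurable (Ψ z) := fun z => hΨ_meas.comp measurable_prodMk_left
  have hΨz_int : ∀ z, Integrable (Ψ z) := fun z => oapf_aux_integrable_of_integral_eq_one (hΨ_int z)
  have hφ_meas : ∀ z, Measurable (φ z) := by
    intro z
    exact (hg_meas.mul (Finset.measurable_sum _ fun j _ =>
      (measurable_const.mul (hfx (z j))))).div (hΨz_meas z)
  have hnum_meas : ∀ z, Measurable (fun x => g x * ∑ j, W j z * f x (z j)) := by
    intro z
    exact hg_meas.mul (Finset.measurable_sum _ fun j _ => measurable_const.mul (hfx (z j)))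
  have hnum_nonneg : ∀ z x, 0 ≤ g x * ∑ j, W j z * f x (z j) := fun z x =>
    mul_nonneg (hg_nonneg x)
      (Finset.sum_nonneg fun j _ => mul_nonneg (hW_nonneg j z) (hf_nonneg x (z j)))
  have hnum_int : ∀ z, Integrable (fun x => g x * ∑ j, W j z * f x (z j)) := by
    intro z
    have hbig : Integrable (fun x => C * ∑ j, W j z * f x (z j)) :=
      (integrable_finset_sum _ fun j _ => ((hfint (z j)).const_mul (W j z))).const_mul C
    refine Integrable.mono' hbig (hnum_meas z).aestronglyMeasurable (ae_of_all _ fun x => ?_)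
    rw [Real.norm_eq_abs, abs_of_nonneg (hnum_nonneg z x)]
    exact mul_le_mul_of_nonneg_right (hC x)
      (Finset.sum_nonneg fun j _ => mul_nonneg (hW_nonneg j z) (hf_nonneg x (z j)))
  -- the key pointwise a.e. identity cancelling Ψ
  have key_ae : ∀ z, (fun x => (Ψ z x).toNNReal • φ z x)
      =ᵐ[volume] fun x => g x * ∑ j, W j z * f x (z j) := by
    intro z
    filter_upwards [hΨ_supp z] with x hx
    rcases (hΨ_nonneg z x).lt_or_eq with hpos | h0
    · simp only [hφdef, NNReal.smul_def, Real.coe_toNNReal _ hpos.le, smul_eq_mul]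
      field_simp
    · have hnum0 : g x * ∑ j, W j z * f x (z j) = 0 := by
        by_contra hne
        have hlt : 0 < g x * ∑ j, W j z * f x (z j) :=
          lt_of_le_of_ne (hnum_nonneg z x) (Ne.symm hne)
        exact absurd (hx hlt) (by rw [← h0]; exact lt_irrefl 0)
      simp [hφdef, ← h0, hnum0, NNReal.smul_def]
  -- the proposal measures
  have hprob : ∀ z, IsProbabilityMeasure
      (volume.withDensity fun x => ENNReal.ofReal (Ψ z x)) := by
    intro z
    constructor
    rw [withDensity_apply _ MeasurableSet.univ, Measure.restrict_univ,
      ← ofReal_integral_eq_lintegral_ofReal (hΨz_int z) (ae_of_all _ (hΨ_nonneg z)),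
      hΨ_int z, ENNReal.ofReal_one]
  have hdens : ∀ z, (fun x => ENNReal.ofReal (Ψ z x))
      = fun x => ((Ψ z x).toNNReal : ENNReal) := fun z => rfl
  have hφ_int : ∀ z, Integrable (φ z)
      (volume.withDensity fun x => ENNReal.ofReal (Ψ z x)) := by
    intro z
    rw [hdens z, integrable_withDensity_iff_integrable_smul (hΨz_meas z).real_toNNReal]
    exact (hnum_int z).congr ((key_ae z).symm)
  have hφ_integral : ∀ z, ∫ x, φ z x
      ∂(volume.withDensity fun x => ENNReal.ofReal (Ψ z x)) = h z := by
    intro z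
    rw [hdens z, integral_withDensity_eq_integral_smul (hΨz_meas z).real_toNNReal (φ z),
      integral_congr_ae (key_ae z)]
    have hsplit : ∀ x, g x * ∑ j, W j z * f x (z j) = ∑ j, W j z * (g x * f x (z j)) := by
      intro x
      rw [Finset.mul_sum]
      exact Finset.sum_congr rfl fun j _ => by ring
    simp_rw [hsplit]
    rw [integral_finset_sum _ (fun j _ => ((hgf_int (z j)).const_mul (W j z)))]
    simp_rw [integral_const_mul]
    rfl
  -- per-coordinate facts under κ z
  have hcomp_int : ∀ z (m : Fin M), Integrable (fun x : Fin M → Fin d → ℝ => φ z (x m)) (κ z) := by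
    intro z m
    haveI := hprob z
    rw [hκ z]
    have h1 : Integrable (φ z) ((Measure.pi fun _ : Fin M =>
        volume.withDensity fun x => ENNReal.ofReal (Ψ z x)).map (Function.eval m)) := by
      rw [map_eval_pi_prob]
      exact hφ_int z
    exact (integrable_map_measure ((hφ_meas z).aestronglyMeasurable)
      (measurable_pi_apply m).aemeasurable).mp h1
  have hcomp_integral : ∀ z (m : Fin M), ∫ x, φ z (x m) ∂(κ z) = h z := by
    intro z m
    haveI := hprob z
    rw [hκ z]
    calc ∫ x, φ z (x m) ∂(Measure.pi fun _ : Fin M =>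
            volume.withDensity fun x => ENNReal.ofReal (Ψ z x))
        = ∫ y, φ z y ∂((Measure.pi fun _ : Fin M =>
            volume.withDensity fun x => ENNReal.ofReal (Ψ z x)).map (Function.eval m)) :=
          (integral_map (measurable_pi_apply m).aemeasurable
            ((hφ_meas z).aestronglyMeasurable)).symm
      _ = h z := by rw [map_eval_pi_prob]; exact hφ_integral z
  have hMne : (M : ℝ) ≠ 0 := Nat.cast_ne_zero.mpr (by omega)
  have hFeq : F = fun p => (M : ℝ)⁻¹ * ∑ m, φ p.1 (p.2 m) := hF
  have hFz_int : ∀ z, Integrable (fun x => F (z, x)) (κ z) := by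
    intro z
    rw [hFeq]
    exact (integrable_finset_sum _ fun m _ => hcomp_int z m).const_mul _
  have hFz_integral : ∀ z, ∫ x, F (z, x) ∂(κ z) = h z := by
    intro z
    rw [hFeq]
    simp only
    rw [integral_const_mul, integral_finset_sum _ (fun m _ => hcomp_int z m)]
    simp_rw [hcomp_integral z]
    rw [Finset.sum_const, Finset.card_univ, Fintype.card_fin, nsmul_eq_mul]
    field_simp
  have hF_nonneg : ∀ p, 0 ≤ F p := by
    intro p
    rw [hFeq]
    exact mul_nonneg (by positivity)
      (Finset.sum_nonneg fun m _ => div_nonneg (hnum_nonneg p.1 (p.2 m)) (hΨ_nonneg p.1 (p.2 m)))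
  have hF_meas : Measurable F := by
    rw [hFeq]
    simp only [hφdef]
    have hm2 : ∀ m : Fin M, Measurable fun p :
        (Fin J → Fin d → ℝ) × (Fin M → Fin d → ℝ) => p.2 m :=
      fun m => measurable_snd.eval
    have hm1 : ∀ j : Fin J, Measurable fun p :
        (Fin J → Fin d → ℝ) × (Fin M → Fin d → ℝ) => p.1 j :=
      fun j => measurable_fst.eval
    refine Measurable.const_mul (Finset.measurable_sum _ fun m _ => ?_) _
    exact ((hg_meas.comp (hm2 m)).mul
      (Finset.measurable_sum _ fun j _ =>
        ((hW_meas j).comp measurable_fst).mul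
          (hf_meas.comp ((hm2 m).prodMk (hm1 j))))).div
      (hΨ_meas.comp (measurable_fst.prodMk (hm2 m)))
  -- integrability of F under the joint law
  have hh_int : Integrable h ρ := by
    refine Integrable.mono' (integrable_const C) hh_meas.aestronglyMeasurable
      (ae_of_all _ fun z => ?_)
    rw [Real.norm_eq_abs, abs_of_nonneg (hh_nonneg z)]
    exact hh_le z
  have hF_int : Integrable F (ρ.compProd κ) := by
    rw [Measure.integrable_compProd_iff hF_meas.aestronglyMeasurable]
    constructor
    · exact ae_of_all _ fun z => hFz_int z
    · have heq : (fun z => ∫ y, ‖F (z, y)‖ ∂(κ z)) = h := by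
        funext z
        simp_rw [Real.norm_of_nonneg (hF_nonneg _)]
        exact hFz_integral z
      rw [heq]
      exact hh_int
  -- the candidate conditional expectation
  have hcand_eq : (fun p : (Fin J → Fin d → ℝ) × (Fin M → Fin d → ℝ) =>
      ∑ j, W j p.1 * ∫ x, g x * f x (p.1 j)) = fun p => h p.1 := rfl
  have hcand_int : Integrable (fun p : (Fin J → Fin d → ℝ) × (Fin M → Fin d → ℝ) => h p.1)
      (ρ.compProd κ) := by
    refine Integrable.mono' (integrable_const C)
      (hh_meas.comp measurable_fst).aestronglyMeasurable (ae_of_all _ fun p => ?_)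
    rw [Real.norm_eq_abs, abs_of_nonneg (hh_nonneg p.1)]
    exact hh_le p.1
  have hm : MeasurableSpace.comap (Prod.fst :
        (Fin J → Fin d → ℝ) × (Fin M → Fin d → ℝ) → _) inferInstance ≤
      (inferInstance : MeasurableSpace ((Fin J → Fin d → ℝ) × (Fin M → Fin d → ℝ))) :=
    measurable_fst.comap_le
  haveI : SigmaFinite ((ρ.compProd κ).trim hm) := by
    haveI : IsFiniteMeasure ((ρ.compProd κ).trim hm) := by
      constructor
      rw [trim_measurableSet_eq hm (@MeasurableSet.univ _ _)]
      exact measure_lt_top _ _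
    infer_instance
  rw [hcand_eq]
  refine (ae_eq_condExp_of_forall_setIntegral_eq hm hF_int ?_ ?_ ?_).symm
  · exact fun s _ _ => hcand_int.integrableOn
  · rintro s ⟨t, ht, rfl⟩ -
    rw [show (Prod.fst ⁻¹' t :
        Set ((Fin J → Fin d → ℝ) × (Fin M → Fin d → ℝ))) = t ×ˢ Set.univ from
      (Set.prod_univ).symm]
    rw [Measure.setIntegral_compProd ht MeasurableSet.univ hcand_int.integrableOn,
      Measure.setIntegral_compProd ht MeasurableSet.univ hF_int.integrableOn]
    refine setIntegral_congr_fun ht fun z _ => ?_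
    simp only [Measure.restrict_univ]
    rw [integral_const, hFz_integral z]
    simp
  · refine StronglyMeasurable.aestronglyMeasurable ?_
    refine Measurable.stronglyMeasurable ?_
    exact hh_meas.comp (Measurable.of_comap_le le_rfl)
end

section
/- (Lemma 2, inductive step: two-step telescoping identity for the product estimator.) With the setup below, the following identity holds in [0,∞] (all integrands are nonnegative, integrals are Lebesgue integrals): ∫_{(ℝ^d)^M} Ẑ₁(u) · ( ∫_{(ℝ^d)^M} (1/M)·Σ_{m=1}^M w̃₂(u, x_m) · Π_{m=1}^M Ψ₂(u)(x_m) dx ) · Π_{m=1}^M ψ₁(u_m) du = Σ_{j=1}^J w_j ∫_{ℝ^d} ∫_{ℝ^d} g₂(x) f₂(x, x') g₁(x') f₁(x', z_j) dx' dx. -/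
open MeasureTheory

lemma lintegral_pi_prod {α : Type*} [MeasureSpace α] [SigmaFinite (volume : Measure α)]
    {n : ℕ} (f : Fin n → α → ENNReal) (hf : ∀ i, Measurable (f i)) :
    ∫⁻ x : Fin n → α, ∏ i, f i (x i) = ∏ i, ∫⁻ y, f i y := by
  induction n with
  | zero => simp [volume_pi, Measure.pi_empty_univ]
  | succ n ih =>
    have hg : AEMeasurable (fun x : Fin n → α => ∏ i, f i.succ (x i)) volume :=
      (Finset.measurable_prod _ fun i _ => (hf i.succ).comp (measurable_pi_apply i)).aemeasurable
    have key := lintegral_prod_mul (μ := (volume : Measure α))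
      (ν := (volume : Measure (Fin n → α))) (f := f 0)
      (g := fun x : Fin n → α => ∏ i, f i.succ (x i)) (hf 0).aemeasurable hg
    calc
      _ = ∫⁻ x : α × (Fin n → α), f 0 x.1 * ∏ i : Fin n, f i.succ (x.2 i) := by
        rw [volume_pi, ← ((measurePreserving_piFinSuccAbove
          (fun _ : Fin (n+1) => (volume : Measure α)) 0).symm).lintegral_comp_emb
          (MeasurableEquiv.measurableEmbedding _)]
        simp_rw [MeasurableEquiv.piFinSuccAbove_symm_apply, Fin.insertNthEquiv,
          Fin.prod_univ_succ, Fin.insertNth_zero, Equiv.coe_fn_mk]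
        simp only [Fin.zero_succAbove, Fin.cons_zero, Fin.cons_succ, cast_eq]
        rfl
      _ = (∫⁻ y, f 0 y) * ∏ i : Fin n, ∫⁻ y, f i.succ y := by
        rw [Measure.volume_eq_prod, key, ih (fun i => f i.succ) (fun i => hf _)]
      _ = _ := by rw [Fin.prod_univ_succ]

lemma lintegral_pi_single_prod {α : Type*} [MeasureSpace α] [SigmaFinite (volume : Measure α)]
    {n : ℕ} (h q : α → ENNReal) (hh : Measurable h) (hq : Measurable q)
    (hq1 : ∫⁻ y, q y = 1) (m : Fin n) :
    ∫⁻ x : Fin n → α, h (x m) * ∏ i, q (x i) = ∫⁻ y, h y * q y := by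
  classical
  set f : Fin n → α → ENNReal := Function.update (fun _ : Fin n => q) m
    (fun y => h y * q y) with hf
  have e1 : ∀ r : Fin n → ENNReal, ∏ i, r i = r m * ∏ i ∈ Finset.univ.erase m, r i :=
    fun r => (Finset.mul_prod_erase _ _ (Finset.mem_univ m)).symm
  have hfm : f m = fun y => h y * q y := Function.update_self _ _ _
  have hfi : ∀ i ≠ m, f i = q := fun i hi => Function.update_of_ne hi _ _
  have hmeas : ∀ i, Measurable (f i) := by
    intro i
    rcases eq_or_ne i m with rfl | hi
    · rw [hfm]; exact hh.mul hq
    · rw [hfi i hi]; exact hq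
  have herase : ∀ x : Fin n → α, ∏ i ∈ Finset.univ.erase m, f i (x i)
      = ∏ i ∈ Finset.univ.erase m, q (x i) :=
    fun x => Finset.prod_congr rfl fun i hi => by
      rw [hfi i (Finset.ne_of_mem_erase hi)]
  have herase2 : ∏ i ∈ Finset.univ.erase m, ∫⁻ y, f i y
      = ∏ i ∈ Finset.univ.erase m, ∫⁻ y, q y :=
    Finset.prod_congr rfl fun i hi => by
      rw [hfi i (Finset.ne_of_mem_erase hi)]
  have hpt : ∀ x : Fin n → α, h (x m) * ∏ i, q (x i) = ∏ i, f i (x i) := by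
    intro x
    rw [e1 (fun i => q (x i)), e1 (fun i => f i (x i)), hfm, herase]
    ring
  simp_rw [hpt]
  rw [lintegral_pi_prod _ hmeas, e1 (fun i => ∫⁻ y, f i y), hfm, herase2]
  simp [hq1]

lemma lintegral_pi_sum_prod {α : Type*} [MeasureSpace α] [SigmaFinite (volume : Measure α)]
    {n : ℕ} (h q : α → ENNReal) (hh : Measurable h) (hq : Measurable q)
    (hq1 : ∫⁻ y, q y = 1) :
    ∫⁻ x : Fin n → α, (∑ m, h (x m)) * ∏ i, q (x i) = n * ∫⁻ y, h y * q y := by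
  simp_rw [Finset.sum_mul]
  rw [lintegral_finset_sum (f := fun (m : Fin n) (x : Fin n → α) => h (x m) * ∏ i, q (x i)) _
    (fun m _ => ((hh.comp (measurable_pi_apply m)).mul
    (Finset.measurable_prod _ fun i _ => hq.comp (measurable_pi_apply i))))]
  simp_rw [fun m : Fin n => lintegral_pi_single_prod h q hh hq hq1 m]
  simp [Finset.sum_const, Finset.card_univ, nsmul_eq_mul]

lemma lintegral_ofReal_pdf {α : Type*} [MeasureSpace α] {p : α → ℝ}
    (h0 : ∀ x, 0 ≤ p x) (h1 : ∫ x, p x = 1) :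
    ∫⁻ x, ENNReal.ofReal (p x) = 1 := by
  have hint : Integrable p := by
    by_contra h
    rw [integral_undef h] at h1
    norm_num at h1
  rw [← ofReal_integral_eq_lintegral_ofReal hint (Filter.Eventually.of_forall h0), h1,
    ENNReal.ofReal_one]

open scoped ENNReal

/-- **Lemma 2 (inductive step): two-step telescoping identity for the product
estimator.**  With first-step weights `w̃₁`, estimator `Ẑ₁`, second-step adaptive
proposal `Ψ₂`, normalized weights `W m u`, and second-step weights `w̃₂`, one has
`∫ Ẑ₁(u) (∫ (1/M)∑ₘ w̃₂(u,xₘ) ∏ₘ Ψ₂(u)(xₘ) dx) ∏ₘ ψ₁(uₘ) du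
  = ∑ⱼ wⱼ ∫∫ g₂(x) f₂(x,x') g₁(x') f₁(x',zⱼ) dx' dx`, as an identity in `[0,∞]`. -/
theorem oapf_two_step_telescoping
    (d J M : ℕ) (hd : 1 ≤ d) (hJ : 1 ≤ J) (hM : 1 ≤ M)
    (z : Fin J → (Fin d → ℝ))
    (w : Fin J → ℝ) (hw_nonneg : ∀ j, 0 ≤ w j) (hw_sum : ∑ j, w j = 1)
    (g₁ g₂ : (Fin d → ℝ) → ℝ)
    (hg₁_meas : Measurable g₁) (hg₂_meas : Measurable g₂)
    (hg₁_nonneg : ∀ x, 0 ≤ g₁ x) (hg₂_nonneg : ∀ x, 0 ≤ g₂ x)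
    (f₁ f₂ : (Fin d → ℝ) → (Fin d → ℝ) → ℝ)
    (hf₁_meas : Measurable (Function.uncurry f₁))
    (hf₂_meas : Measurable (Function.uncurry f₂))
    (hf₁_nonneg : ∀ x z', 0 ≤ f₁ x z') (hf₂_nonneg : ∀ x z', 0 ≤ f₂ x z')
    (hf₁_int : ∀ z', ∫ x, f₁ x z' = 1) (hf₂_int : ∀ z', ∫ x, f₂ x z' = 1)
    -- first step
    (πt₁ : (Fin d → ℝ) → ℝ) (hπt₁ : πt₁ = fun x => g₁ x * ∑ j, w j * f₁ x (z j))
    (ψ₁ : (Fin d → ℝ) → ℝ) (hψ₁_meas : Measurable ψ₁)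
    (hψ₁_nonneg : ∀ x, 0 ≤ ψ₁ x) (hψ₁_int : ∫ x, ψ₁ x = 1)
    (hψ₁_supp : ∀ᵐ x, 0 < πt₁ x → 0 < ψ₁ x)
    (wt₁ : (Fin d → ℝ) → ℝ) (hwt₁ : wt₁ = fun x => πt₁ x / ψ₁ x)
    (Z₁ : (Fin M → (Fin d → ℝ)) → ℝ)
    (hZ₁ : Z₁ = fun u => (M : ℝ)⁻¹ * ∑ m, wt₁ (u m))
    -- second step (adaptive proposal)
    (Ψ₂ : (Fin M → (Fin d → ℝ)) → (Fin d → ℝ) → ℝ)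
    (hΨ₂_meas : Measurable (Function.uncurry Ψ₂))
    (hΨ₂_nonneg : ∀ u x, 0 ≤ Ψ₂ u x) (hΨ₂_int : ∀ u, ∫ x, Ψ₂ u x = 1)
    (hΨ₂_supp : ∀ u, ∀ᵐ x,
      0 < g₂ x * ∑ m, wt₁ (u m) * f₂ x (u m) → 0 < Ψ₂ u x)
    (W : Fin M → (Fin M → (Fin d → ℝ)) → ℝ)
    (hW : W = fun m u => wt₁ (u m) / ∑ i, wt₁ (u i))
    (wt₂ : (Fin M → (Fin d → ℝ)) → (Fin d → ℝ) → ℝ)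
    (hwt₂ : wt₂ = fun u x => g₂ x * (∑ m, W m u * f₂ x (u m)) / Ψ₂ u x) :
    (∫⁻ u : Fin M → (Fin d → ℝ),
        ENNReal.ofReal (Z₁ u)
          * (∫⁻ x : Fin M → (Fin d → ℝ),
              ENNReal.ofReal ((M : ℝ)⁻¹ * ∑ m, wt₂ u (x m))
                * ∏ m, ENNReal.ofReal (Ψ₂ u (x m)))
          * ∏ m, ENNReal.ofReal (ψ₁ (u m)))
      = ∑ j, ENNReal.ofReal (w j)
          * ∫⁻ x, ∫⁻ x', ENNReal.ofReal
              (g₂ x * f₂ x x' * g₁ x' * f₁ x' (z j)) := by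
  classical
  -- nonnegativity facts
  have hπ_nonneg : ∀ v, 0 ≤ πt₁ v := by
    intro v; rw [hπt₁]
    exact mul_nonneg (hg₁_nonneg v) (Finset.sum_nonneg fun j _ =>
      mul_nonneg (hw_nonneg j) (hf₁_nonneg v (z j)))
  have hwt₁_nonneg : ∀ v, 0 ≤ wt₁ v := by
    intro v; rw [hwt₁]; exact div_nonneg (hπ_nonneg v) (hψ₁_nonneg v)
  have hW_nonneg : ∀ m u, 0 ≤ W m u := by
    intro m u; rw [hW]
    exact div_nonneg (hwt₁_nonneg _) (Finset.sum_nonneg fun i _ => hwt₁_nonneg _)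
  have hsumWf_nonneg : ∀ u y, 0 ≤ ∑ m, W m u * f₂ y (u m) := fun u y =>
    Finset.sum_nonneg fun m _ => mul_nonneg (hW_nonneg m u) (hf₂_nonneg _ _)
  have hwt₂_nonneg : ∀ u x, 0 ≤ wt₂ u x := by
    intro u x; rw [hwt₂]
    exact div_nonneg (mul_nonneg (hg₂_nonneg x) (hsumWf_nonneg u x)) (hΨ₂_nonneg u x)
  have hZ₁_nonneg : ∀ u, 0 ≤ Z₁ u := by
    intro u; rw [hZ₁]
    exact mul_nonneg (by positivity) (Finset.sum_nonneg fun m _ => hwt₁_nonneg _)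
  -- measurability facts
  have hf₁z : ∀ j, Measurable fun v => f₁ v (z j) :=
    fun j => hf₁_meas.comp (measurable_id.prodMk measurable_const)
  have hπ_meas : Measurable πt₁ := by
    rw [hπt₁]
    exact hg₁_meas.mul (Finset.measurable_sum _ fun j _ => measurable_const.mul (hf₁z j))
  have hwt₁_meas : Measurable wt₁ := by rw [hwt₁]; exact hπ_meas.div hψ₁_meas
  have hf₂x : ∀ v, Measurable fun y => f₂ y v :=
    fun v => hf₂_meas.comp (measurable_id.prodMk measurable_const)
  have hf₂y : ∀ y, Measurable (f₂ y) := fun y => hf₂_meas.comp measurable_prodMk_left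
  have hΨ₂u : ∀ u, Measurable (Ψ₂ u) := fun u => hΨ₂_meas.comp measurable_prodMk_left
  have hwt₂u : ∀ u, Measurable (wt₂ u) := by
    intro u; rw [hwt₂]
    exact (hg₂_meas.mul (Finset.measurable_sum _ fun m _ =>
      measurable_const.mul (hf₂x (u m)))).div (hΨ₂u u)
  -- integral-one facts
  have hψ₁_lint : ∫⁻ y, ENNReal.ofReal (ψ₁ y) = 1 :=
    lintegral_ofReal_pdf hψ₁_nonneg hψ₁_int
  have hΨ₂_lint : ∀ u, ∫⁻ y, ENNReal.ofReal (Ψ₂ u y) = 1 :=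
    fun u => lintegral_ofReal_pdf (hΨ₂_nonneg u) (hΨ₂_int u)
  have hM0 : (M : ℝ≥0∞) ≠ 0 := Nat.cast_ne_zero.mpr (by omega)
  have hMconst : ENNReal.ofReal (M : ℝ)⁻¹ * (M : ℝ≥0∞) = 1 := by
    rw [ENNReal.ofReal_inv_of_pos (by positivity), ENNReal.ofReal_natCast]
    exact ENNReal.inv_mul_cancel hM0 (ENNReal.natCast_ne_top M)
  -- pointwise identity P1
  have P1 : ∀ u y, Z₁ u * (g₂ y * ∑ m, W m u * f₂ y (u m))
      = g₂ y * ((M : ℝ)⁻¹ * ∑ m, wt₁ (u m) * f₂ y (u m)) := by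
    intro u y
    rw [hZ₁, hW]
    dsimp only
    rcases eq_or_ne (∑ i, wt₁ (u i)) 0 with h0 | hne
    · have hz : ∀ m : Fin M, wt₁ (u m) = 0 := by
        intro m
        exact (Finset.sum_eq_zero_iff_of_nonneg
          (fun i _ => hwt₁_nonneg (u i))).mp h0 m (Finset.mem_univ m)
      simp [h0, hz]
    · simp_rw [div_mul_eq_mul_div, ← Finset.sum_div]
      field_simp
  -- a.e. identity P2
  have P2 : ∀ u, ∀ᵐ y, wt₂ u y * Ψ₂ u y = g₂ y * ∑ m, W m u * f₂ y (u m) := by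
    intro u
    filter_upwards [hΨ₂_supp u] with y hy
    rcases eq_or_ne (Ψ₂ u y) 0 with h0 | hne
    · rw [h0, mul_zero]
      by_contra hcon
      have hpos : 0 < g₂ y * ∑ m, W m u * f₂ y (u m) :=
        lt_of_le_of_ne (mul_nonneg (hg₂_nonneg y) (hsumWf_nonneg u y)) (fun h => hcon h)
      have hs : ∑ m, W m u * f₂ y (u m) ≠ 0 := by
        intro h; rw [h, mul_zero] at hpos; exact lt_irrefl 0 hpos
      have hex : ∃ m : Fin M, wt₁ (u m) * f₂ y (u m) ≠ 0 := by
        by_contra hall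
        push_neg at hall
        apply hs
        refine Finset.sum_eq_zero fun m _ => ?_
        rcases mul_eq_zero.mp (hall m) with h1 | h2
        · rw [hW]; dsimp only; rw [h1, zero_div, zero_mul]
        · rw [h2, mul_zero]
      obtain ⟨m, hm⟩ := hex
      have hg2 : 0 < g₂ y := by
        refine lt_of_le_of_ne (hg₂_nonneg y) (Ne.symm fun h => ?_)
        rw [h, zero_mul] at hpos; exact lt_irrefl 0 hpos
      have hterm : 0 < wt₁ (u m) * f₂ y (u m) :=
        lt_of_le_of_ne (mul_nonneg (hwt₁_nonneg _) (hf₂_nonneg _ _)) (Ne.symm hm)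
      have hsum2 : 0 < ∑ m, wt₁ (u m) * f₂ y (u m) :=
        Finset.sum_pos' (fun i _ => mul_nonneg (hwt₁_nonneg _) (hf₂_nonneg _ _))
          ⟨m, Finset.mem_univ m, hterm⟩
      have hΨpos := hy (mul_pos hg2 hsum2)
      rw [h0] at hΨpos; exact absurd hΨpos (lt_irrefl 0)
    · rw [hwt₂]
      dsimp only
      rw [div_mul_cancel₀ _ hne]
  -- a.e. identity P3
  have P3 : ∀ᵐ v, wt₁ v * ψ₁ v = πt₁ v := by
    filter_upwards [hψ₁_supp] with v hv
    rcases eq_or_ne (ψ₁ v) 0 with h0 | hne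
    · rw [h0, mul_zero]
      by_contra hcon
      have hpos : 0 < πt₁ v := lt_of_le_of_ne (hπ_nonneg v) hcon
      have := hv hpos
      rw [h0] at this; exact absurd this (lt_irrefl 0)
    · rw [hwt₁]
      dsimp only
      rw [div_mul_cancel₀ _ hne]
  -- abbreviation
  set E := ENNReal.ofReal with hE
  have hc_ne_top : ∀ r : ℝ, E r ≠ ⊤ := fun r => ENNReal.ofReal_ne_top
  -- Step 1 : per-u inner computation
  have step1 : ∀ u : Fin M → (Fin d → ℝ),
      E (Z₁ u) * (∫⁻ x : Fin M → (Fin d → ℝ),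
          E ((M : ℝ)⁻¹ * ∑ m, wt₂ u (x m)) * ∏ m, E (Ψ₂ u (x m)))
        = ∫⁻ y, E (g₂ y * ((M : ℝ)⁻¹ * ∑ m, wt₁ (u m) * f₂ y (u m))) := by
    intro u
    have e1 : ∀ x : Fin M → (Fin d → ℝ),
        E ((M : ℝ)⁻¹ * ∑ m, wt₂ u (x m)) * ∏ m, E (Ψ₂ u (x m))
          = E (M : ℝ)⁻¹ * ((∑ m, E (wt₂ u (x m))) * ∏ m, E (Ψ₂ u (x m))) := by
      intro x
      rw [hE, ENNReal.ofReal_mul (by positivity),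
        ENNReal.ofReal_sum_of_nonneg (fun m _ => hwt₂_nonneg u (x m)), mul_assoc]
    simp_rw [e1]
    rw [lintegral_const_mul' _ _ (hc_ne_top _)]
    rw [show (∫⁻ x : Fin M → (Fin d → ℝ),
          (∑ m, E (wt₂ u (x m))) * ∏ m, E (Ψ₂ u (x m)))
        = (M : ℝ≥0∞) * ∫⁻ y, E (wt₂ u y) * E (Ψ₂ u y) from
      lintegral_pi_sum_prod _ _ ((hwt₂u u).ennreal_ofReal)
        ((hΨ₂u u).ennreal_ofReal) (hΨ₂_lint u)]
    rw [← mul_assoc (E (M : ℝ)⁻¹), hMconst, one_mul]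
    rw [← lintegral_const_mul' _ _ (hc_ne_top (Z₁ u))]
    refine lintegral_congr_ae ?_
    filter_upwards [P2 u] with y hy
    rw [hE, ← ENNReal.ofReal_mul (hwt₂_nonneg u y), hy,
      ← ENNReal.ofReal_mul (hZ₁_nonneg u), P1 u y]
  -- splitting of the ofReal
  have split : ∀ (u : Fin M → (Fin d → ℝ)) (y : Fin d → ℝ),
      E (g₂ y * ((M : ℝ)⁻¹ * ∑ m, wt₁ (u m) * f₂ y (u m)))
        = E (g₂ y) * (E (M : ℝ)⁻¹ * ∑ m, E (wt₁ (u m)) * E (f₂ y (u m))) := by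
    intro u y
    rw [hE, ENNReal.ofReal_mul (hg₂_nonneg y),
      ENNReal.ofReal_mul (by positivity : (0:ℝ) ≤ (M : ℝ)⁻¹),
      ENNReal.ofReal_sum_of_nonneg
        (fun m _ => mul_nonneg (hwt₁_nonneg _) (hf₂_nonneg _ _)),
      Finset.sum_congr rfl (fun m _ => ENNReal.ofReal_mul (hwt₁_nonneg (u m)))]
  -- joint measurability for Tonelli
  have hF_meas : Measurable (Function.uncurry
      (fun (u : Fin M → (Fin d → ℝ)) (y : Fin d → ℝ) =>
        E (g₂ y) * (E (M : ℝ)⁻¹ * ∑ m, E (wt₁ (u m)) * E (f₂ y (u m)))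
          * ∏ m, E (ψ₁ (u m)))) := by
    rw [Function.uncurry_def]
    exact (((hg₂_meas.comp measurable_snd).ennreal_ofReal.mul
      (measurable_const.mul (Finset.measurable_sum _ fun m _ =>
        ((hwt₁_meas.comp ((measurable_pi_apply m).comp measurable_fst)).ennreal_ofReal).mul
        ((hf₂_meas.comp (measurable_snd.prodMk
          ((measurable_pi_apply m).comp measurable_fst))).ennreal_ofReal)))).mul
      (Finset.measurable_prod _ fun m _ =>
        (hψ₁_meas.comp ((measurable_pi_apply m).comp measurable_fst)).ennreal_ofReal))
  -- per-y outer computation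
  have step2 : ∀ y : Fin d → ℝ,
      (∫⁻ u : Fin M → (Fin d → ℝ),
        E (g₂ y) * (E (M : ℝ)⁻¹ * ∑ m, E (wt₁ (u m)) * E (f₂ y (u m)))
          * ∏ m, E (ψ₁ (u m)))
        = E (g₂ y) * ∫⁻ v, E (f₂ y v) * E (πt₁ v) := by
    intro y
    have rearr : ∀ u : Fin M → (Fin d → ℝ),
        E (g₂ y) * (E (M : ℝ)⁻¹ * ∑ m, E (wt₁ (u m)) * E (f₂ y (u m)))
            * ∏ m, E (ψ₁ (u m))
          = (E (g₂ y) * E (M : ℝ)⁻¹)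
            * ((∑ m, E (wt₁ (u m)) * E (f₂ y (u m))) * ∏ m, E (ψ₁ (u m))) := by
      intro u; ring
    simp_rw [rearr]
    rw [lintegral_const_mul' _ _ (ENNReal.mul_ne_top (hc_ne_top _) (hc_ne_top _))]
    rw [show (∫⁻ u : Fin M → (Fin d → ℝ),
          (∑ m, E (wt₁ (u m)) * E (f₂ y (u m))) * ∏ m, E (ψ₁ (u m)))
        = (M : ℝ≥0∞) * ∫⁻ v, (E (wt₁ v) * E (f₂ y v)) * E (ψ₁ v) from
      lintegral_pi_sum_prod _ _ (hwt₁_meas.ennreal_ofReal.mul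
        ((hf₂y y).ennreal_ofReal)) (hψ₁_meas.ennreal_ofReal) hψ₁_lint]
    rw [mul_assoc, ← mul_assoc (E (M : ℝ)⁻¹), hMconst, one_mul]
    congr 1
    refine lintegral_congr_ae ?_
    filter_upwards [P3] with v hv
    rw [mul_right_comm, hE, ← ENNReal.ofReal_mul (hwt₁_nonneg v), hv, mul_comm]
  -- pointwise expansion into the sum over j
  have P4 : ∀ (y v : Fin d → ℝ),
      E (g₂ y) * (E (f₂ y v) * E (πt₁ v))
        = ∑ j, E (w j) * E (g₂ y * f₂ y v * g₁ v * f₁ v (z j)) := by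
    intro y v
    have hreal : g₂ y * (f₂ y v * πt₁ v)
        = ∑ j, w j * (g₂ y * f₂ y v * g₁ v * f₁ v (z j)) := by
      rw [hπt₁]
      simp only [Finset.mul_sum]
      exact Finset.sum_congr rfl fun j _ => by ring
    rw [hE, ← ENNReal.ofReal_mul (hf₂_nonneg y v),
      ← ENNReal.ofReal_mul (hg₂_nonneg y), hreal,
      ENNReal.ofReal_sum_of_nonneg (fun j _ => mul_nonneg (hw_nonneg j)
        (mul_nonneg (mul_nonneg (mul_nonneg (hg₂_nonneg y) (hf₂_nonneg y v)) (hg₁_nonneg v)) (hf₁_nonneg v (z j))))]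
    exact Finset.sum_congr rfl fun j _ => ENNReal.ofReal_mul (hw_nonneg j)
  calc
    (∫⁻ u : Fin M → (Fin d → ℝ),
        E (Z₁ u)
          * (∫⁻ x : Fin M → (Fin d → ℝ),
              E ((M : ℝ)⁻¹ * ∑ m, wt₂ u (x m)) * ∏ m, E (Ψ₂ u (x m)))
          * ∏ m, E (ψ₁ (u m)))
      = ∫⁻ u : Fin M → (Fin d → ℝ),
          (∫⁻ y, E (g₂ y) * (E (M : ℝ)⁻¹ * ∑ m, E (wt₁ (u m)) * E (f₂ y (u m))))
            * ∏ m, E (ψ₁ (u m)) := by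
        refine lintegral_congr fun u => ?_
        rw [step1 u]
        simp_rw [split u]
    _ = ∫⁻ u : Fin M → (Fin d → ℝ), ∫⁻ y,
          E (g₂ y) * (E (M : ℝ)⁻¹ * ∑ m, E (wt₁ (u m)) * E (f₂ y (u m)))
            * ∏ m, E (ψ₁ (u m)) := by
        refine lintegral_congr fun u => ?_
        exact (lintegral_mul_const' _ _
          ((ENNReal.prod_lt_top fun _ _ => ENNReal.ofReal_lt_top).ne)).symm
    _ = ∫⁻ y, ∫⁻ u : Fin M → (Fin d → ℝ),
          E (g₂ y) * (E (M : ℝ)⁻¹ * ∑ m, E (wt₁ (u m)) * E (f₂ y (u m)))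
            * ∏ m, E (ψ₁ (u m)) := lintegral_lintegral_swap hF_meas.aemeasurable
    _ = ∫⁻ y, E (g₂ y) * ∫⁻ v, E (f₂ y v) * E (πt₁ v) := lintegral_congr step2
    _ = ∫⁻ y, ∫⁻ v, ∑ j, E (w j) * E (g₂ y * f₂ y v * g₁ v * f₁ v (z j)) := by
        refine lintegral_congr fun y => ?_
        rw [← lintegral_const_mul' _ _ (hc_ne_top _)]
        exact lintegral_congr fun v => P4 y v
    _ = ∑ j, E (w j)
          * ∫⁻ x, ∫⁻ x', E (g₂ x * f₂ x x' * g₁ x' * f₁ x' (z j)) := by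
        have hjoint : ∀ j : Fin J, Measurable (Function.uncurry
            (fun (y v : Fin d → ℝ) => E (g₂ y * f₂ y v * g₁ v * f₁ v (z j)))) := by
          intro j
          rw [Function.uncurry_def]
          exact ((((hg₂_meas.comp measurable_fst).mul hf₂_meas).mul
            (hg₁_meas.comp measurable_snd)).mul
            ((hf₁z j).comp measurable_snd)).ennreal_ofReal
        have hinner_meas : ∀ j : Fin J,
            Measurable fun y => ∫⁻ v, E (g₂ y * f₂ y v * g₁ v * f₁ v (z j)) :=
          fun j => (hjoint j).lintegral_prod_right
        have e2 : ∀ y : Fin d → ℝ,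
            (∫⁻ v, ∑ j, E (w j) * E (g₂ y * f₂ y v * g₁ v * f₁ v (z j)))
              = ∑ j, E (w j) * ∫⁻ v, E (g₂ y * f₂ y v * g₁ v * f₁ v (z j)) := by
          intro y
          rw [lintegral_finset_sum (f := fun j v => E (w j) * E (g₂ y * f₂ y v * g₁ v * f₁ v (z j))) _ (fun j _ => measurable_const.mul
            ((((measurable_const.mul (hf₂y y)).mul hg₁_meas).mul
              (hf₁z j)).ennreal_ofReal))]
          exact Finset.sum_congr rfl fun j _ => lintegral_const_mul' _ _ (hc_ne_top _)
        simp_rw [e2]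
        rw [lintegral_finset_sum (f := fun j y => E (w j) * ∫⁻ v, E (g₂ y * f₂ y v * g₁ v * f₁ v (z j))) _ (fun j _ => measurable_const.mul (hinner_meas j))]
        exact Finset.sum_congr rfl fun j _ => lintegral_const_mul' _ _ (hc_ne_top _)
end

section
/- (Theorem 1, case T = 1: unbiasedness of the OAPF marginal-likelihood estimator with prior-sample-dependent proposal.) With the setup below, the following identity holds in [0,∞] (all integrands are nonnegative, integrals are Lebesgue integrals): ∫_{(ℝ^d)^M} ∫_{(ℝ^d)^M} ( (1/M)·Σ_{m=1}^M g(x_m)·((1/M)·Σ_{j=1}^M f(x_m, z_j)) / Ψ(z)(x_m) ) · Π_{m=1}^M Ψ(z)(x_m) dx · Π_{j=1}^M p₀(z_j) dz = ∫_{ℝ^d} ∫_{ℝ^d} g(x) f(x, z) p₀(z) dz dx, i.e. the expectation of Ẑ₁ over the prior particles and the proposal draws equals the true marginal likelihood p(y₁). -/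
open MeasureTheory

/-- Lebesgue-integral Fubini for products over `Fin n → E`. -/
theorem oapf_aux_lintegral_fin_prod {n : ℕ} {E : Type*}
    [MeasureSpace E] [SigmaFinite (volume : Measure E)]
    (f : Fin n → E → ENNReal) (hf : ∀ i, Measurable (f i)) :
    ∫⁻ x : Fin n → E, ∏ i, f i (x i) = ∏ i, ∫⁻ t, f i t := by
  induction n with
  | zero => simp [volume_pi, lintegral_const, Measure.pi_empty_univ]
  | succ n ih =>
    have hmp := measurePreserving_piFinSuccAbove
      (fun _ : Fin (n + 1) => (volume : Measure E)) 0
    have key := hmp.lintegral_map_equiv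
      (fun p : E × (Fin n → E) => f 0 p.1 * ∏ j : Fin n, f j.succ (p.2 j))
      (MeasurableEquiv.piFinSuccAbove (fun _ => E) 0)
    have hpt : ∀ x : Fin (n + 1) → E,
        (fun p : E × (Fin n → E) => f 0 p.1 * ∏ j : Fin n, f j.succ (p.2 j))
          ((MeasurableEquiv.piFinSuccAbove (fun _ => E) 0) x)
        = ∏ i, f i (x i) := by
      intro x
      rw [Fin.prod_univ_succ]
      simp [MeasurableEquiv.piFinSuccAbove, Fin.zero_succAbove, Fin.tail]
    calc ∫⁻ x : Fin (n + 1) → E, ∏ i, f i (x i)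
        = ∫⁻ a : E × (Fin n → E), f 0 a.1 * ∏ j : Fin n, f j.succ (a.2 j)
            ∂((volume : Measure E).prod (Measure.pi fun _ : Fin n => (volume : Measure E))) := by
          rw [volume_pi, key]
          exact lintegral_congr fun x => (hpt x).symm
      _ = (∫⁻ t, f 0 t) * ∫⁻ y : Fin n → E, ∏ j : Fin n, f j.succ (y j)
            ∂(Measure.pi fun _ : Fin n => (volume : Measure E)) :=
          lintegral_prod_mul (hf 0).aemeasurable
            ((Finset.measurable_prod Finset.univ fun (j : Fin n) _ =>
              (hf j.succ).comp (measurable_pi_apply j)).aemeasurable)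
      _ = (∫⁻ t, f 0 t) * ∏ j : Fin n, ∫⁻ t, f j.succ t := by
          rw [show (Measure.pi fun _ : Fin n => (volume : Measure E))
              = (volume : Measure (Fin n → E)) from (volume_pi).symm,
            ih (fun j => f j.succ) (fun j => hf j.succ)]
      _ = ∏ i, ∫⁻ t, f i t := by rw [Fin.prod_univ_succ]

/-- If a nonnegative function has Bochner integral `1`, its `ofReal` lintegral is `1`. -/
theorem oapf_aux_lintegral_ofReal_one {E : Type*} [MeasureSpace E] {p : E → ℝ}
    (hp : ∀ x, 0 ≤ p x) (h1 : ∫ x, p x = 1) :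
    ∫⁻ x, ENNReal.ofReal (p x) = 1 := by
  have hint : Integrable p := by
    by_contra h
    rw [integral_undef h] at h1
    exact zero_ne_one h1
  rw [← ofReal_integral_eq_lintegral_ofReal hint (Filter.Eventually.of_forall hp), h1,
    ENNReal.ofReal_one]

/-- Integral of `u (x m) * ∏ i, v (x i)` over a product space, where `v` integrates to `1`. -/
theorem oapf_aux_lintegral_coord {M : ℕ} {E : Type*} [MeasureSpace E]
    [SigmaFinite (volume : Measure E)] (m : Fin M)
    (u v : E → ENNReal) (hu : Measurable u) (hv : Measurable v)
    (hv1 : ∫⁻ t, v t = 1) :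
    ∫⁻ x : Fin M → E, u (x m) * ∏ i, v (x i) = ∫⁻ t, u t * v t := by
  set φ : Fin M → E → ENNReal := fun i => if i = m then fun t => u t * v t else v with hφ
  have hφm : ∀ i, Measurable (φ i) := by
    intro i
    rw [hφ]
    dsimp only
    split
    · exact hu.mul hv
    · exact hv
  have hpt : ∀ x : Fin M → E, u (x m) * ∏ i, v (x i) = ∏ i, φ i (x i) := by
    intro x
    rw [← Finset.mul_prod_erase Finset.univ (fun i => φ i (x i)) (Finset.mem_univ m),
        ← Finset.mul_prod_erase Finset.univ (fun i => v (x i)) (Finset.mem_univ m),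
        ← mul_assoc]
    have h1 : φ m (x m) = u (x m) * v (x m) := by simp [hφ]
    have h2 : ∀ i ∈ Finset.univ.erase m, φ i (x i) = v (x i) := by
      intro i hi
      simp [hφ, Finset.ne_of_mem_erase hi]
    rw [h1, Finset.prod_congr rfl h2]
  calc ∫⁻ x : Fin M → E, u (x m) * ∏ i, v (x i)
      = ∫⁻ x : Fin M → E, ∏ i, φ i (x i) := by
        exact lintegral_congr hpt
    _ = ∏ i, ∫⁻ t, φ i t := oapf_aux_lintegral_fin_prod φ hφm
    _ = (∫⁻ t, φ m t) * ∏ i ∈ Finset.univ.erase m, ∫⁻ t, φ i t :=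
        (Finset.mul_prod_erase Finset.univ _ (Finset.mem_univ m)).symm
    _ = ∫⁻ t, u t * v t := by
        have h1 : (∫⁻ t, φ m t) = ∫⁻ t, u t * v t := by simp [hφ]
        have h2 : ∀ i ∈ Finset.univ.erase m, (∫⁻ t, φ i t) = 1 := by
          intro i hi
          have : φ i = v := by simp [hφ, Finset.ne_of_mem_erase hi]
          rw [this, hv1]
        rw [h1, Finset.prod_congr rfl h2, Finset.prod_const_one, mul_one]

/-- **Theorem 1, case `T = 1`: unbiasedness of the OAPF marginal-likelihood
estimator with a prior-sample-dependent proposal.**  With prior particles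
`z₁,…,z_M` i.i.d. from `p₀` and an adaptive proposal `Ψ z`,
`E[Ẑ₁] = ∫∫ g(x) f(x,z) p₀(z) dz dx = p(y₁)`, as an identity in `[0,∞]`. -/
theorem oapf_unbiased_T1
    (d M : ℕ) (hd : 1 ≤ d) (hM : 1 ≤ M)
    (p₀ : (Fin d → ℝ) → ℝ) (hp₀_meas : Measurable p₀)
    (hp₀_nonneg : ∀ x, 0 ≤ p₀ x) (hp₀_int : ∫ x, p₀ x = 1)
    (f : (Fin d → ℝ) → (Fin d → ℝ) → ℝ)
    (hf_meas : Measurable (Function.uncurry f))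
    (hf_nonneg : ∀ x z, 0 ≤ f x z) (hf_int : ∀ z, ∫ x, f x z = 1)
    (g : (Fin d → ℝ) → ℝ) (hg_meas : Measurable g) (hg_nonneg : ∀ x, 0 ≤ g x)
    (Ψ : (Fin M → (Fin d → ℝ)) → (Fin d → ℝ) → ℝ)
    (hΨ_meas : Measurable (Function.uncurry Ψ))
    (hΨ_nonneg : ∀ z x, 0 ≤ Ψ z x) (hΨ_int : ∀ z, ∫ x, Ψ z x = 1)
    (hΨ_supp : ∀ z, ∀ᵐ x, 0 < g x * ∑ j, f x (z j) → 0 < Ψ z x) :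
    (∫⁻ z : Fin M → (Fin d → ℝ),
        (∫⁻ x : Fin M → (Fin d → ℝ),
            ENNReal.ofReal ((M : ℝ)⁻¹ *
                ∑ m, g (x m) * ((M : ℝ)⁻¹ * ∑ j, f (x m) (z j)) / Ψ z (x m))
              * ∏ m, ENNReal.ofReal (Ψ z (x m)))
          * ∏ j, ENNReal.ofReal (p₀ (z j)))
      = ∫⁻ x, ∫⁻ z, ENNReal.ofReal (g x * f x z * p₀ z) := by
  have hMpos : (0 : ℝ) < (M : ℝ) := by exact_mod_cast Nat.lt_of_lt_of_le Nat.zero_lt_one hM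
  have hMne : (M : ENNReal) ≠ 0 := by
    simpa using Nat.one_le_iff_ne_zero.mp hM
  have hMcancel : ENNReal.ofReal ((M : ℝ)⁻¹) * (M : ENNReal) = 1 := by
    rw [ENNReal.ofReal_inv_of_pos hMpos, ENNReal.ofReal_natCast,
      ENNReal.inv_mul_cancel hMne (by simp)]
  -- basic measurability facts
  have hfz : ∀ w : Fin d → ℝ, Measurable fun t => f t w := fun w =>
    hf_meas.comp (measurable_id.prodMk measurable_const)
  have hΨz : ∀ z, Measurable (Ψ z) := fun z =>
    hΨ_meas.comp (measurable_const.prodMk measurable_id)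
  -- Step 1: collapse the inner x-integral for each z
  have step1 : ∀ z : Fin M → (Fin d → ℝ),
      (∫⁻ x : Fin M → (Fin d → ℝ),
          ENNReal.ofReal ((M : ℝ)⁻¹ *
              ∑ m, g (x m) * ((M : ℝ)⁻¹ * ∑ j, f (x m) (z j)) / Ψ z (x m))
            * ∏ m, ENNReal.ofReal (Ψ z (x m)))
      = ∫⁻ t, ENNReal.ofReal (g t * ((M : ℝ)⁻¹ * ∑ j, f t (z j))) := by
    intro z
    set c : (Fin d → ℝ) → ℝ := fun t => g t * ((M : ℝ)⁻¹ * ∑ j, f t (z j)) / Ψ z t with hc_def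
    have hsum_meas : Measurable fun t => ∑ j, f t (z j) :=
      Finset.measurable_sum Finset.univ fun j _ => hfz (z j)
    have hc_nonneg : ∀ t, 0 ≤ c t := fun t =>
      div_nonneg (mul_nonneg (hg_nonneg t) (mul_nonneg (by positivity)
        (Finset.sum_nonneg fun j _ => hf_nonneg _ _))) (hΨ_nonneg z t)
    have hc_meas : Measurable c :=
      (hg_meas.mul (measurable_const.mul hsum_meas)).div (hΨz z)
    have hΨ1 : ∫⁻ t, ENNReal.ofReal (Ψ z t) = 1 :=
      oapf_aux_lintegral_ofReal_one (hΨ_nonneg z) (hΨ_int z)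
    have hrw : ∀ x : Fin M → (Fin d → ℝ),
        ENNReal.ofReal ((M : ℝ)⁻¹ *
            ∑ m, g (x m) * ((M : ℝ)⁻¹ * ∑ j, f (x m) (z j)) / Ψ z (x m))
          * ∏ m, ENNReal.ofReal (Ψ z (x m))
        = ENNReal.ofReal ((M : ℝ)⁻¹) *
            ∑ m, (ENNReal.ofReal (c (x m)) * ∏ m', ENNReal.ofReal (Ψ z (x m'))) := by
      intro x
      rw [ENNReal.ofReal_mul (by positivity),
        ENNReal.ofReal_sum_of_nonneg (fun m _ => hc_nonneg (x m)),
        mul_assoc, Finset.sum_mul]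
    have hterm_meas : ∀ m : Fin M, Measurable fun x : Fin M → (Fin d → ℝ) =>
        ENNReal.ofReal (c (x m)) * ∏ m', ENNReal.ofReal (Ψ z (x m')) := fun m =>
      ((ENNReal.measurable_ofReal.comp hc_meas).comp (measurable_pi_apply m)).mul
        (Finset.measurable_prod Finset.univ fun m' _ =>
          (ENNReal.measurable_ofReal.comp (hΨz z)).comp (measurable_pi_apply m'))
    have hae : ∀ᵐ t : Fin d → ℝ,
        ENNReal.ofReal (c t) * ENNReal.ofReal (Ψ z t)
        = ENNReal.ofReal (g t * ((M : ℝ)⁻¹ * ∑ j, f t (z j))) := by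
      filter_upwards [hΨ_supp z] with t ht
      by_cases hpos : 0 < Ψ z t
      · rw [hc_def]
        rw [← ENNReal.ofReal_mul (hc_nonneg t), div_mul_cancel₀ _ (ne_of_gt hpos)]
      · have hΨ0 : Ψ z t = 0 := le_antisymm (not_lt.mp hpos) (hΨ_nonneg z t)
        have hge : 0 ≤ g t * ∑ j, f t (z j) :=
          mul_nonneg (hg_nonneg t) (Finset.sum_nonneg fun j _ => hf_nonneg _ _)
        have h0 : g t * ∑ j, f t (z j) = 0 :=
          le_antisymm (not_lt.mp fun hcon => hpos (ht hcon)) hge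
        have h0' : g t * ((M : ℝ)⁻¹ * ∑ j, f t (z j)) = 0 := by
          rw [mul_left_comm, h0, mul_zero]
        simp [hc_def, hΨ0, h0']
    have hterm : ∀ m : Fin M,
        (∫⁻ x : Fin M → (Fin d → ℝ),
            ENNReal.ofReal (c (x m)) * ∏ m', ENNReal.ofReal (Ψ z (x m')))
        = ∫⁻ t, ENNReal.ofReal (g t * ((M : ℝ)⁻¹ * ∑ j, f t (z j))) := by
      intro m
      rw [oapf_aux_lintegral_coord m (fun t => ENNReal.ofReal (c t))
        (fun t => ENNReal.ofReal (Ψ z t)) (ENNReal.measurable_ofReal.comp hc_meas)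
        (ENNReal.measurable_ofReal.comp (hΨz z)) hΨ1]
      exact lintegral_congr_ae hae
    calc (∫⁻ x : Fin M → (Fin d → ℝ),
          ENNReal.ofReal ((M : ℝ)⁻¹ *
              ∑ m, g (x m) * ((M : ℝ)⁻¹ * ∑ j, f (x m) (z j)) / Ψ z (x m))
            * ∏ m, ENNReal.ofReal (Ψ z (x m)))
        = ∫⁻ x : Fin M → (Fin d → ℝ), ENNReal.ofReal ((M : ℝ)⁻¹) *
            ∑ m, (ENNReal.ofReal (c (x m)) * ∏ m', ENNReal.ofReal (Ψ z (x m'))) :=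
          lintegral_congr hrw
      _ = ENNReal.ofReal ((M : ℝ)⁻¹) *
            ∑ m, ∫⁻ x : Fin M → (Fin d → ℝ),
              ENNReal.ofReal (c (x m)) * ∏ m', ENNReal.ofReal (Ψ z (x m')) := by
          rw [lintegral_const_mul _ (Finset.measurable_sum Finset.univ fun m _ => hterm_meas m),
            lintegral_finset_sum Finset.univ fun m _ => hterm_meas m]
      _ = ∫⁻ t, ENNReal.ofReal (g t * ((M : ℝ)⁻¹ * ∑ j, f t (z j))) := by
          rw [Finset.sum_congr rfl fun m _ => hterm m, Finset.sum_const, Finset.card_univ,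
            Fintype.card_fin, nsmul_eq_mul, ← mul_assoc, hMcancel, one_mul]
  -- Step 2: the z-integral
  have hgf_meas : Measurable fun p : (Fin d → ℝ) × (Fin d → ℝ) =>
      ENNReal.ofReal (g p.1 * f p.1 p.2) :=
    ENNReal.measurable_ofReal.comp ((hg_meas.comp measurable_fst).mul hf_meas)
  set u : (Fin d → ℝ) → ENNReal := fun s => ∫⁻ t, ENNReal.ofReal (g t * f t s) with hu_def
  have hu_meas : Measurable u :=
    Measurable.lintegral_prod_left (f := fun t s => ENNReal.ofReal (g t * f t s)) hgf_meas
  have hp1 : ∫⁻ s, ENNReal.ofReal (p₀ s) = 1 :=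
    oapf_aux_lintegral_ofReal_one hp₀_nonneg hp₀_int
  have step2 : ∀ z : Fin M → (Fin d → ℝ),
      (∫⁻ t, ENNReal.ofReal (g t * ((M : ℝ)⁻¹ * ∑ j, f t (z j))))
      = ENNReal.ofReal ((M : ℝ)⁻¹) * ∑ j, u (z j) := by
    intro z
    have hrw : ∀ t : Fin d → ℝ,
        ENNReal.ofReal (g t * ((M : ℝ)⁻¹ * ∑ j, f t (z j)))
        = ENNReal.ofReal ((M : ℝ)⁻¹) * ∑ j, ENNReal.ofReal (g t * f t (z j)) := by
      intro t
      have : g t * ((M : ℝ)⁻¹ * ∑ j, f t (z j)) = (M : ℝ)⁻¹ * ∑ j, g t * f t (z j) := by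
        rw [mul_left_comm, Finset.mul_sum]
      rw [this, ENNReal.ofReal_mul (by positivity),
        ENNReal.ofReal_sum_of_nonneg fun j _ => mul_nonneg (hg_nonneg t) (hf_nonneg _ _)]
    have hj_meas : ∀ j : Fin M, Measurable fun t => ENNReal.ofReal (g t * f t (z j)) :=
      fun j => ENNReal.measurable_ofReal.comp (hg_meas.mul (hfz (z j)))
    rw [lintegral_congr hrw,
      lintegral_const_mul _ (Finset.measurable_sum Finset.univ fun j _ => hj_meas j),
      lintegral_finset_sum Finset.univ fun j _ => hj_meas j]
  -- assemble
  calc (∫⁻ z : Fin M → (Fin d → ℝ),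
        (∫⁻ x : Fin M → (Fin d → ℝ),
            ENNReal.ofReal ((M : ℝ)⁻¹ *
                ∑ m, g (x m) * ((M : ℝ)⁻¹ * ∑ j, f (x m) (z j)) / Ψ z (x m))
              * ∏ m, ENNReal.ofReal (Ψ z (x m)))
          * ∏ j, ENNReal.ofReal (p₀ (z j)))
      = ∫⁻ z : Fin M → (Fin d → ℝ),
          ENNReal.ofReal ((M : ℝ)⁻¹) *
            ∑ j, (u (z j) * ∏ k, ENNReal.ofReal (p₀ (z k))) := by
        refine lintegral_congr fun z => ?_
        rw [step1 z, step2 z, mul_assoc, Finset.sum_mul]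
    _ = ENNReal.ofReal ((M : ℝ)⁻¹) *
          ∑ j, ∫⁻ z : Fin M → (Fin d → ℝ), u (z j) * ∏ k, ENNReal.ofReal (p₀ (z k)) := by
        have hjm : ∀ j : Fin M, Measurable fun z : Fin M → (Fin d → ℝ) =>
            u (z j) * ∏ k, ENNReal.ofReal (p₀ (z k)) := fun j =>
          (hu_meas.comp (measurable_pi_apply j)).mul
            (Finset.measurable_prod Finset.univ fun k _ =>
              (ENNReal.measurable_ofReal.comp hp₀_meas).comp (measurable_pi_apply k))
        rw [lintegral_const_mul _ (Finset.measurable_sum Finset.univ fun j _ => hjm j),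
          lintegral_finset_sum Finset.univ fun j _ => hjm j]
    _ = ENNReal.ofReal ((M : ℝ)⁻¹) *
          ∑ _j : Fin M, ∫⁻ s, u s * ENNReal.ofReal (p₀ s) := by
        refine congrArg _ (Finset.sum_congr rfl fun j _ => ?_)
        exact oapf_aux_lintegral_coord j u (fun s => ENNReal.ofReal (p₀ s)) hu_meas
          (ENNReal.measurable_ofReal.comp hp₀_meas) hp1
    _ = ∫⁻ s, u s * ENNReal.ofReal (p₀ s) := by
        rw [Finset.sum_const, Finset.card_univ, Fintype.card_fin, nsmul_eq_mul,
          ← mul_assoc, hMcancel, one_mul]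
    _ = ∫⁻ s, ∫⁻ t, ENNReal.ofReal (g t * f t s * p₀ s) := by
        refine lintegral_congr fun s => ?_
        rw [hu_def]
        dsimp only
        rw [← lintegral_mul_const _ (show Measurable fun t => ENNReal.ofReal (g t * f t s) from
          (hg_meas.mul (hfz s)).ennreal_ofReal)]
        refine lintegral_congr fun t => ?_
        rw [← ENNReal.ofReal_mul (mul_nonneg (hg_nonneg t) (hf_nonneg t s))]
    _ = ∫⁻ t, ∫⁻ s, ENNReal.ofReal (g t * f t s * p₀ s) := by
        refine lintegral_lintegral_swap ?_
        apply Measurable.aemeasurable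
        exact ENNReal.measurable_ofReal.comp
          (((hg_meas.comp measurable_snd).mul
            (hf_meas.comp (measurable_snd.prodMk measurable_fst))).mul
            (hp₀_meas.comp measurable_fst))
end

section
/- (Theorem 1, case T = 2: unbiasedness of the OAPF joint marginal-likelihood estimator Ẑ₁·Ẑ₂.) With the setup below, the following identity holds in [0,∞] (all integrands are nonnegative, integrals are Lebesgue integrals): ∫_{(ℝ^d)^M} ∫_{(ℝ^d)^M} ∫_{(ℝ^d)^M} Ẑ₁(z, u) · Ẑ₂(z, u, x) · Π_{m=1}^M Ψ₂(z, u)(x_m) dx · Π_{m=1}^M Ψ₁(z)(u_m) du · Π_{j=1}^M p₀(z_j) dz = ∫_{ℝ^d} ∫_{ℝ^d} ∫_{ℝ^d} g₂(x) f₂(x, x') g₁(x') f₁(x', z) p₀(z) dz dx' dx, i.e. E[Ẑ₁·Ẑ₂] = p(y_{1:2}). -/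
open MeasureTheory ENNReal

lemma lintegral_pi_prod_s4 {α : Type*} [MeasurableSpace α] (μ : Measure α) [SigmaFinite μ] :
    ∀ (n : ℕ) (f : Fin n → α → ℝ≥0∞), (∀ i, Measurable (f i)) →
    ∫⁻ x : Fin n → α, ∏ i, f i (x i) ∂Measure.pi (fun _ => μ) = ∏ i, ∫⁻ v, f i v ∂μ := by
  intro n
  induction n with
  | zero =>
    intro f hf
    simp [Measure.pi_univ]
  | succ n ih =>
    intro f hf
    have h := measurePreserving_piFinSuccAbove (fun _ : Fin (n+1) => μ) 0
    rw [(h.symm _).lintegral_map_equiv]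
    have key : ∀ p : α × (Fin n → α),
        ∏ i, f i (((MeasurableEquiv.piFinSuccAbove (fun _ => α) 0).symm p) i)
          = f 0 p.1 * ∏ j, f j.succ (p.2 j) := by
      intro p
      rw [Fin.prod_univ_succ]
      have h0 : ((MeasurableEquiv.piFinSuccAbove (fun _ : Fin (n+1) => α) 0).symm p) 0 = p.1 := by
        simp [MeasurableEquiv.piFinSuccAbove]
      have hs : ∀ j : Fin n,
          ((MeasurableEquiv.piFinSuccAbove (fun _ : Fin (n+1) => α) 0).symm p) j.succ = p.2 j := by
        intro j
        have hj : (0 : Fin (n+1)).succAbove j = j.succ := congrFun Fin.succAbove_zero j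
        rw [MeasurableEquiv.piFinSuccAbove_symm_apply, ← hj]
        simp [Fin.insertNthEquiv]
      rw [h0]
      exact congrArg _ (Finset.prod_congr rfl fun j _ => by rw [hs j])
    simp_rw [key]
    have hg : Measurable fun y : Fin n → α => ∏ j, f j.succ (y j) := by
      apply Finset.measurable_prod
      intro j _
      exact (hf j.succ).comp (measurable_pi_apply j)
    rw [lintegral_prod_mul (f := f 0) (g := fun y : Fin n → α => ∏ j, f j.succ (y j))
      (hf 0).aemeasurable hg.aemeasurable]
    rw [ih (fun j => f j.succ) (fun j => hf j.succ), Fin.prod_univ_succ]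

lemma lintegral_pi_coord {α : Type*} [MeasurableSpace α] (μ : Measure α) [SigmaFinite μ]
    (n : ℕ) (F G : α → ℝ≥0∞) (hF : Measurable F) (hG : Measurable G)
    (hFone : ∫⁻ v, F v ∂μ = 1) (k : Fin n) :
    ∫⁻ x : Fin n → α, G (x k) * ∏ i, F (x i) ∂Measure.pi (fun _ => μ)
      = ∫⁻ v, G v * F v ∂μ := by
  classical
  set f : Fin n → α → ℝ≥0∞ := fun i => if i = k then (fun v => G v * F v) else F with hfdef
  have hpt : ∀ x : Fin n → α, G (x k) * ∏ i, F (x i) = ∏ i, f i (x i) := by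
    intro x
    rw [← Finset.mul_prod_erase Finset.univ (fun i => F (x i)) (Finset.mem_univ k),
        ← Finset.mul_prod_erase Finset.univ (fun i => f i (x i)) (Finset.mem_univ k), ← mul_assoc]
    congr 1
    · simp [hfdef]
    · refine Finset.prod_congr rfl fun i hi => ?_
      have : i ≠ k := (Finset.mem_erase.mp hi).1
      simp [hfdef, this]
  simp_rw [hpt]
  rw [lintegral_pi_prod_s4 μ n f (fun i => by
    by_cases h : i = k <;> simp [hfdef, h, hG.mul hF, hF] <;> exact hG.mul hF)]
  rw [← Finset.mul_prod_erase Finset.univ (fun i => ∫⁻ v, f i v ∂μ) (Finset.mem_univ k)]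
  have h1 : ∏ i ∈ Finset.univ.erase k, ∫⁻ v, f i v ∂μ = 1 := by
    refine Finset.prod_eq_one fun i hi => ?_
    have : i ≠ k := (Finset.mem_erase.mp hi).1
    simp [hfdef, this, hFone]
  rw [h1, mul_one]
  simp [hfdef]

lemma lintegral_ofReal_pdf_s4 {α : Type*} [MeasurableSpace α] {μ : Measure α} {f : α → ℝ}
    (hnn : ∀ x, 0 ≤ f x) (hint : ∫ x, f x ∂μ = 1) :
    ∫⁻ x, ENNReal.ofReal (f x) ∂μ = 1 := by
  have hi : Integrable f μ := by
    by_contra h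
    rw [integral_undef h] at hint
    norm_num at hint
  rw [← ofReal_integral_eq_lintegral_ofReal hi (Filter.Eventually.of_forall hnn), hint,
    ENNReal.ofReal_one]

lemma lintegral_vol_pi_coord {α : Type*} [MeasureSpace α] [SigmaFinite (volume : Measure α)]
    (n : ℕ) (F G : α → ℝ≥0∞) (hF : Measurable F) (hG : Measurable G)
    (hFone : ∫⁻ v, F v = 1) (k : Fin n) :
    ∫⁻ x : Fin n → α, G (x k) * ∏ i, F (x i) = ∫⁻ v, G v * F v := by
  rw [volume_pi]
  exact lintegral_pi_coord _ n F G hF hG hFone k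

/-- **Theorem 1, case `T = 2`: unbiasedness of the OAPF joint marginal-likelihood
estimator `Ẑ₁·Ẑ₂`.**  With prior particles i.i.d. from `p₀`, adaptive proposals
`Ψ₁ z` and `Ψ₂ z u`, one has, as an identity in `[0,∞]`,
`E[Ẑ₁·Ẑ₂] = ∫∫∫ g₂(x) f₂(x,x') g₁(x') f₁(x',z) p₀(z) dz dx' dx = p(y_{1:2})`. -/
theorem oapf_unbiased_T2
    (d M : ℕ) (hd : 1 ≤ d) (hM : 1 ≤ M)
    (p₀ : (Fin d → ℝ) → ℝ) (hp₀_meas : Measurable p₀)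
    (hp₀_nonneg : ∀ x, 0 ≤ p₀ x) (hp₀_int : ∫ x, p₀ x = 1)
    (f₁ f₂ : (Fin d → ℝ) → (Fin d → ℝ) → ℝ)
    (hf₁_meas : Measurable (Function.uncurry f₁))
    (hf₂_meas : Measurable (Function.uncurry f₂))
    (hf₁_nonneg : ∀ x z, 0 ≤ f₁ x z) (hf₂_nonneg : ∀ x z, 0 ≤ f₂ x z)
    (hf₁_int : ∀ z, ∫ x, f₁ x z = 1) (hf₂_int : ∀ z, ∫ x, f₂ x z = 1)
    (g₁ g₂ : (Fin d → ℝ) → ℝ)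
    (hg₁_meas : Measurable g₁) (hg₂_meas : Measurable g₂)
    (hg₁_nonneg : ∀ x, 0 ≤ g₁ x) (hg₂_nonneg : ∀ x, 0 ≤ g₂ x)
    (Ψ₁ : (Fin M → (Fin d → ℝ)) → (Fin d → ℝ) → ℝ)
    (hΨ₁_meas : Measurable (Function.uncurry Ψ₁))
    (hΨ₁_nonneg : ∀ z x, 0 ≤ Ψ₁ z x) (hΨ₁_int : ∀ z, ∫ x, Ψ₁ z x = 1)
    (hΨ₁_supp : ∀ z, ∀ᵐ x, 0 < g₁ x * ∑ j, f₁ x (z j) → 0 < Ψ₁ z x)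
    -- first-step weights and estimator
    (wt₁ : (Fin M → (Fin d → ℝ)) → (Fin d → ℝ) → ℝ)
    (hwt₁ : wt₁ = fun z x =>
      g₁ x * ((M : ℝ)⁻¹ * ∑ j, f₁ x (z j)) / Ψ₁ z x)
    (Z₁ : (Fin M → (Fin d → ℝ)) → (Fin M → (Fin d → ℝ)) → ℝ)
    (hZ₁ : Z₁ = fun z u => (M : ℝ)⁻¹ * ∑ m, wt₁ z (u m))
    -- second-step adaptive proposal
    (Ψ₂ : (Fin M → (Fin d → ℝ)) → (Fin M → (Fin d → ℝ)) → (Fin d → ℝ) → ℝ)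
    (hΨ₂_meas : Measurable (fun p : ((Fin M → (Fin d → ℝ)) × (Fin M → (Fin d → ℝ)))
        × (Fin d → ℝ) => Ψ₂ p.1.1 p.1.2 p.2))
    (hΨ₂_nonneg : ∀ z u x, 0 ≤ Ψ₂ z u x) (hΨ₂_int : ∀ z u, ∫ x, Ψ₂ z u x = 1)
    (hΨ₂_supp : ∀ z u, ∀ᵐ x,
      0 < g₂ x * ∑ m, wt₁ z (u m) * f₂ x (u m) → 0 < Ψ₂ z u x)
    -- normalized weights, second-step weights and estimator
    (W : Fin M → (Fin M → (Fin d → ℝ)) → (Fin M → (Fin d → ℝ)) → ℝ)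
    (hW : W = fun m z u => wt₁ z (u m) / ∑ i, wt₁ z (u i))
    (wt₂ : (Fin M → (Fin d → ℝ)) → (Fin M → (Fin d → ℝ)) → (Fin d → ℝ) → ℝ)
    (hwt₂ : wt₂ = fun z u x =>
      g₂ x * (∑ m, W m z u * f₂ x (u m)) / Ψ₂ z u x)
    (Z₂ : (Fin M → (Fin d → ℝ)) → (Fin M → (Fin d → ℝ))
      → (Fin M → (Fin d → ℝ)) → ℝ)
    (hZ₂ : Z₂ = fun z u x => (M : ℝ)⁻¹ * ∑ m, wt₂ z u (x m)) :
    (∫⁻ z : Fin M → (Fin d → ℝ),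
        (∫⁻ u : Fin M → (Fin d → ℝ),
            (∫⁻ x : Fin M → (Fin d → ℝ),
                ENNReal.ofReal (Z₁ z u) * ENNReal.ofReal (Z₂ z u x)
                  * ∏ m, ENNReal.ofReal (Ψ₂ z u (x m)))
              * ∏ m, ENNReal.ofReal (Ψ₁ z (u m)))
          * ∏ j, ENNReal.ofReal (p₀ (z j)))
      = ∫⁻ x, ∫⁻ x', ∫⁻ z, ENNReal.ofReal
          (g₂ x * f₂ x x' * g₁ x' * f₁ x' z * p₀ z) := by
    classical
  have hMR : (0:ℝ) < M := by exact_mod_cast hM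
  have hMne : ((M:ℕ):ℝ≥0∞) ≠ 0 := Nat.cast_ne_zero.mpr (by omega)
  have hMtop : ((M:ℕ):ℝ≥0∞) ≠ ⊤ := ENNReal.natCast_ne_top M
  have hMinv : ENNReal.ofReal ((M:ℝ)⁻¹) = ((M:ℕ):ℝ≥0∞)⁻¹ := by
    rw [ENNReal.ofReal_inv_of_pos hMR, ENNReal.ofReal_natCast]
  -- measurability of sections
  have mf₁ : ∀ c, Measurable fun v => f₁ v c :=
    fun c => hf₁_meas.comp (measurable_id.prodMk measurable_const)
  have mf₂ : ∀ c, Measurable fun v => f₂ v c :=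
    fun c => hf₂_meas.comp (measurable_id.prodMk measurable_const)
  have mf₁' : ∀ w, Measurable fun ζ => f₁ w ζ :=
    fun w => hf₁_meas.comp (measurable_const.prodMk measurable_id)
  have mΨ₁ : ∀ z, Measurable (Ψ₁ z) :=
    fun z => hΨ₁_meas.comp (measurable_const.prodMk measurable_id)
  have mΨ₂ : ∀ z u, Measurable (Ψ₂ z u) := by
    intro z u
    have : Measurable fun x => (fun p : ((Fin M → (Fin d → ℝ)) × (Fin M → (Fin d → ℝ)))
        × (Fin d → ℝ) => Ψ₂ p.1.1 p.1.2 p.2) ((z, u), x) :=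
      hΨ₂_meas.comp (measurable_const.prodMk measurable_id)
    exact this
  have mwt₁ : ∀ z, Measurable (wt₁ z) := by
    intro z; rw [hwt₁]
    exact (hg₁_meas.mul (measurable_const.mul
      (Finset.measurable_sum _ fun j _ => mf₁ (z j)))).div (mΨ₁ z)
  have hwt₁nn : ∀ z v, 0 ≤ wt₁ z v := by
    intro z v; rw [hwt₁]
    refine div_nonneg (mul_nonneg (hg₁_nonneg v) (mul_nonneg (by positivity)
      (Finset.sum_nonneg fun j _ => hf₁_nonneg v (z j)))) (hΨ₁_nonneg z v)
  -- lintegral-normalization of the densities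
  have hΨ₁one : ∀ z, ∫⁻ v, ENNReal.ofReal (Ψ₁ z v) = 1 :=
    fun z => lintegral_ofReal_pdf_s4 (hΨ₁_nonneg z) (hΨ₁_int z)
  have hΨ₂one : ∀ z u, ∫⁻ v, ENNReal.ofReal (Ψ₂ z u v) = 1 :=
    fun z u => lintegral_ofReal_pdf_s4 (hΨ₂_nonneg z u) (hΨ₂_int z u)
  have hp₀one : ∫⁻ v, ENNReal.ofReal (p₀ v) = 1 :=
    lintegral_ofReal_pdf_s4 hp₀_nonneg hp₀_int
  -- the key integral kernels
  set H : (Fin d → ℝ) → ℝ≥0∞ :=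
    fun w => ∫⁻ v, ENNReal.ofReal (g₂ v) * ENNReal.ofReal (f₂ v w) with hH
  have mH : Measurable H := by
    apply Measurable.lintegral_prod_right
      (f := fun w v => ENNReal.ofReal (g₂ v) * ENNReal.ofReal (f₂ v w))
    exact ((hg₂_meas.comp measurable_snd).ennreal_ofReal).mul
      ((hf₂_meas.comp (measurable_snd.prodMk measurable_fst)).ennreal_ofReal)
  set L : (Fin d → ℝ) → ℝ≥0∞ :=
    fun ζ => ∫⁻ w, H w * ENNReal.ofReal (g₁ w) * ENNReal.ofReal (f₁ w ζ) with hL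
  have mL : Measurable L := by
    apply Measurable.lintegral_prod_right
      (f := fun ζ w => H w * ENNReal.ofReal (g₁ w) * ENNReal.ofReal (f₁ w ζ))
    exact (((mH.comp measurable_snd).mul
      ((hg₁_meas.comp measurable_snd).ennreal_ofReal)).mul
      ((hf₁_meas.comp (measurable_snd.prodMk measurable_fst)).ennreal_ofReal))
  have step1 : ∀ z u, (∫⁻ x : Fin M → (Fin d → ℝ),
      ENNReal.ofReal (Z₁ z u) * ENNReal.ofReal (Z₂ z u x)
        * ∏ m, ENNReal.ofReal (Ψ₂ z u (x m)))
      = ((M:ℕ):ℝ≥0∞)⁻¹ * ∑ m, ENNReal.ofReal (wt₁ z (u m)) * H (u m) := by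
    intro z u
    set A : (Fin d → ℝ) → ℝ := fun v => g₂ v * ∑ m, wt₁ z (u m) * f₂ v (u m) with hA
    set B : (Fin d → ℝ) → ℝ := fun v => A v / Ψ₂ z u v with hB
    have hAnn : ∀ v, 0 ≤ A v := fun v => mul_nonneg (hg₂_nonneg v)
      (Finset.sum_nonneg fun m _ => mul_nonneg (hwt₁nn z (u m)) (hf₂_nonneg v (u m)))
    have hBnn : ∀ v, 0 ≤ B v := fun v => div_nonneg (hAnn v) (hΨ₂_nonneg z u v)
    have mA : Measurable A := hg₂_meas.mul
      (Finset.measurable_sum _ fun m _ => (mf₂ (u m)).const_mul _)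
    have mB : Measurable B := mA.div (mΨ₂ z u)
    -- (i) pointwise algebraic identity
    have hZw : ∀ v, Z₁ z u * wt₂ z u v = (M:ℝ)⁻¹ * B v := by
      intro v
      rw [hZ₁, hwt₂, hW, hB, hA]
      dsimp only
      by_cases hS : ∑ i, wt₁ z (u i) = 0
      · have hz : ∀ m : Fin M, wt₁ z (u m) = 0 := fun m =>
          (Finset.sum_eq_zero_iff_of_nonneg fun i _ => hwt₁nn z (u i)).mp hS m
            (Finset.mem_univ m)
        simp [hz, hS]
      · have key : ∑ m, (wt₁ z (u m) / ∑ i, wt₁ z (u i)) * f₂ v (u m)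
            = (∑ m, wt₁ z (u m) * f₂ v (u m)) / ∑ i, wt₁ z (u i) := by
          rw [Finset.sum_div]
          exact Finset.sum_congr rfl fun m _ => div_mul_eq_mul_div _ _ _
        rw [key]
        by_cases hc : Ψ₂ z u v = 0
        · simp [hc]
        · field_simp
    -- (ii) a.e. cancellation of the proposal
    have hae : ∀ᵐ v : Fin d → ℝ, ENNReal.ofReal (B v) * ENNReal.ofReal (Ψ₂ z u v)
        = ENNReal.ofReal (A v) := by
      filter_upwards [hΨ₂_supp z u] with v himp
      rcases eq_or_lt_of_le (hAnn v) with hA0 | hApos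
      · have hB0 : B v = 0 := by rw [hB]; dsimp only; rw [← hA0, zero_div]
        rw [hB0, ← hA0]
        simp
      · have hΨpos : 0 < Ψ₂ z u v := himp hApos
        rw [← ENNReal.ofReal_mul (hBnn v), hB]
        dsimp only
        rw [div_mul_cancel₀ _ hΨpos.ne']
    -- (iii) the integral of A
    have hAint : ∫⁻ v, ENNReal.ofReal (A v)
        = ∑ m, ENNReal.ofReal (wt₁ z (u m)) * H (u m) := by
      have hpt : ∀ v, ENNReal.ofReal (A v)
          = ∑ m, ENNReal.ofReal (wt₁ z (u m))
              * (ENNReal.ofReal (g₂ v) * ENNReal.ofReal (f₂ v (u m))) := by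
        intro v
        rw [hA]
        dsimp only
        rw [ENNReal.ofReal_mul (hg₂_nonneg v),
          ENNReal.ofReal_sum_of_nonneg fun m _ =>
            mul_nonneg (hwt₁nn z (u m)) (hf₂_nonneg v (u m)),
          Finset.mul_sum]
        exact Finset.sum_congr rfl fun m _ => by
          rw [ENNReal.ofReal_mul (hwt₁nn z (u m))]; ring
      simp_rw [hpt]
      rw [lintegral_finset_sum (f := fun m v => ENNReal.ofReal (wt₁ z (u m))
          * (ENNReal.ofReal (g₂ v) * ENNReal.ofReal (f₂ v (u m)))) _ fun m _ =>
        (((hg₂_meas.ennreal_ofReal).mul (mf₂ (u m)).ennreal_ofReal).const_mul _)]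
      exact Finset.sum_congr rfl fun m _ => by
        rw [lintegral_const_mul (f := fun v => ENNReal.ofReal (g₂ v) * ENNReal.ofReal (f₂ v (u m)))
          _ ((hg₂_meas.ennreal_ofReal).mul (mf₂ (u m)).ennreal_ofReal)]
    -- (iv) rewrite the integrand
    have hpt2 : ∀ x : Fin M → (Fin d → ℝ),
        ENNReal.ofReal (Z₁ z u) * ENNReal.ofReal (Z₂ z u x)
          = ((M:ℕ):ℝ≥0∞)⁻¹ * ∑ k, ((M:ℕ):ℝ≥0∞)⁻¹ * ENNReal.ofReal (B (x k)) := by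
      intro x
      have hZ₁nn : 0 ≤ Z₁ z u := by
        rw [hZ₁]
        exact mul_nonneg (by positivity) (Finset.sum_nonneg fun m _ => hwt₁nn z (u m))
      rw [← ENNReal.ofReal_mul hZ₁nn]
      have : Z₁ z u * Z₂ z u x = (M:ℝ)⁻¹ * ∑ k, (M:ℝ)⁻¹ * B (x k) := by
        rw [hZ₂]
        dsimp only
        simp only [Finset.mul_sum]
        exact Finset.sum_congr rfl fun k _ => by rw [mul_left_comm, hZw (x k)]
      rw [this, ENNReal.ofReal_mul (by positivity), hMinv,
        ENNReal.ofReal_sum_of_nonneg fun k _ => mul_nonneg (by positivity) (hBnn (x k))]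
      exact congrArg _ (Finset.sum_congr rfl fun k _ => by
        rw [ENNReal.ofReal_mul (by positivity), hMinv])
    simp_rw [hpt2, mul_assoc, Finset.sum_mul, mul_assoc]
    have m1 : ∀ k : Fin M, Measurable fun x : Fin M → (Fin d → ℝ) =>
        ENNReal.ofReal (B (x k)) * ∏ m, ENNReal.ofReal (Ψ₂ z u (x m)) :=
      fun k => ((mB.ennreal_ofReal).comp (measurable_pi_apply k)).mul
        (Finset.measurable_prod _ fun i _ =>
          ((mΨ₂ z u).comp (measurable_pi_apply i)).ennreal_ofReal)
    rw [lintegral_const_mul _ (Finset.measurable_sum _ fun k _ => (m1 k).const_mul _),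
      lintegral_finset_sum _ fun k _ => (m1 k).const_mul _]
    have each : ∀ k : Fin M, (∫⁻ x : Fin M → (Fin d → ℝ),
        ((M:ℕ):ℝ≥0∞)⁻¹ * (ENNReal.ofReal (B (x k)) * ∏ m, ENNReal.ofReal (Ψ₂ z u (x m))))
        = ((M:ℕ):ℝ≥0∞)⁻¹ * ∑ m, ENNReal.ofReal (wt₁ z (u m)) * H (u m) := by
      intro k
      rw [lintegral_const_mul _ (m1 k)]
      congr 1
      rw [lintegral_vol_pi_coord M (fun v => ENNReal.ofReal (Ψ₂ z u v))
        (fun v => ENNReal.ofReal (B v)) ((mΨ₂ z u).ennreal_ofReal)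
        mB.ennreal_ofReal (hΨ₂one z u) k, ← hAint]
      exact lintegral_congr_ae (by filter_upwards [hae] with v hv; rw [hv])
    rw [Finset.sum_congr rfl fun k _ => each k, Finset.sum_const, Finset.card_univ,
      Fintype.card_fin, nsmul_eq_mul, ← mul_assoc, ← mul_assoc,
      ENNReal.inv_mul_cancel hMne hMtop, one_mul]
  have step2 : ∀ z, (∫⁻ u : Fin M → (Fin d → ℝ),
      (((M:ℕ):ℝ≥0∞)⁻¹ * ∑ m, ENNReal.ofReal (wt₁ z (u m)) * H (u m))
        * ∏ m, ENNReal.ofReal (Ψ₁ z (u m)))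
      = ((M:ℕ):ℝ≥0∞)⁻¹ * ∑ j, L (z j) := by
    intro z
    have mφ : Measurable fun v => ENNReal.ofReal (wt₁ z v) * H v :=
      ((mwt₁ z).ennreal_ofReal).mul mH
    have m1 : ∀ m : Fin M, Measurable fun u : Fin M → (Fin d → ℝ) =>
        (ENNReal.ofReal (wt₁ z (u m)) * H (u m)) * ∏ i, ENNReal.ofReal (Ψ₁ z (u i)) :=
      fun m => (mφ.comp (measurable_pi_apply m)).mul
        (Finset.measurable_prod _ fun i _ =>
          ((mΨ₁ z).comp (measurable_pi_apply i)).ennreal_ofReal)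
    simp_rw [mul_assoc, Finset.sum_mul]
    rw [lintegral_const_mul _ (Finset.measurable_sum _ fun m _ => by
      simpa [mul_assoc] using m1 m),
      lintegral_finset_sum _ fun m _ => by simpa [mul_assoc] using m1 m]
    have each : ∀ m : Fin M, (∫⁻ u : Fin M → (Fin d → ℝ),
        (ENNReal.ofReal (wt₁ z (u m)) * H (u m)) * ∏ i, ENNReal.ofReal (Ψ₁ z (u i)))
        = ∫⁻ v, (ENNReal.ofReal (wt₁ z v) * H v) * ENNReal.ofReal (Ψ₁ z v) :=
      fun m => lintegral_vol_pi_coord M (fun v => ENNReal.ofReal (Ψ₁ z v))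
        (fun v => ENNReal.ofReal (wt₁ z v) * H v)
        ((mΨ₁ z).ennreal_ofReal) mφ (hΨ₁one z) m
    rw [Finset.sum_congr rfl fun m _ => each m, Finset.sum_const, Finset.card_univ,
      Fintype.card_fin, nsmul_eq_mul, ← mul_assoc, ENNReal.inv_mul_cancel hMne hMtop, one_mul]
    -- now compute the single-particle integral
    have hae : ∀ᵐ v : Fin d → ℝ, ENNReal.ofReal (wt₁ z v) * ENNReal.ofReal (Ψ₁ z v)
        = ENNReal.ofReal (g₁ v * ((M:ℝ)⁻¹ * ∑ j, f₁ v (z j))) := by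
      filter_upwards [hΨ₁_supp z] with v himp
      have hNnn : 0 ≤ g₁ v * ((M:ℝ)⁻¹ * ∑ j, f₁ v (z j)) :=
        mul_nonneg (hg₁_nonneg v) (mul_nonneg (by positivity)
          (Finset.sum_nonneg fun j _ => hf₁_nonneg v (z j)))
      rcases eq_or_lt_of_le hNnn with hN | hN
      · have hw : wt₁ z v = 0 := by rw [hwt₁]; simp [← hN]
        rw [hw, ← hN]
        simp
      · have hgs : 0 < g₁ v * ∑ j, f₁ v (z j) := by
          have h2 : g₁ v * ∑ j, f₁ v (z j)
              = M * (g₁ v * ((M:ℝ)⁻¹ * ∑ j, f₁ v (z j))) := by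
            field_simp
          rw [h2]
          exact mul_pos hMR hN
        have hΨpos := himp hgs
        rw [← ENNReal.ofReal_mul (hwt₁nn z v), hwt₁]
        congr 1
        exact div_mul_cancel₀ _ hΨpos.ne'
    calc ∫⁻ v, (ENNReal.ofReal (wt₁ z v) * H v) * ENNReal.ofReal (Ψ₁ z v)
        = ∫⁻ v, H v * (ENNReal.ofReal (wt₁ z v) * ENNReal.ofReal (Ψ₁ z v)) :=
          lintegral_congr fun v => by ring
      _ = ∫⁻ v, H v * ENNReal.ofReal (g₁ v * ((M:ℝ)⁻¹ * ∑ j, f₁ v (z j))) := by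
          refine lintegral_congr_ae ?_
          filter_upwards [hae] with v hv
          rw [hv]
      _ = ∫⁻ v, ((M:ℕ):ℝ≥0∞)⁻¹ * ∑ j, H v * ENNReal.ofReal (g₁ v)
            * ENNReal.ofReal (f₁ v (z j)) := by
          refine lintegral_congr fun v => ?_
          rw [ENNReal.ofReal_mul (hg₁_nonneg v), ENNReal.ofReal_mul (by positivity), hMinv,
            ENNReal.ofReal_sum_of_nonneg fun j _ => hf₁_nonneg v (z j), Finset.mul_sum,
            Finset.mul_sum, Finset.mul_sum]
          rw [Finset.mul_sum]
          exact Finset.sum_congr rfl fun j _ => by ring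
      _ = ((M:ℕ):ℝ≥0∞)⁻¹ * ∑ j, L (z j) := by
          rw [lintegral_const_mul (f := fun v => ∑ j, H v * ENNReal.ofReal (g₁ v)
              * ENNReal.ofReal (f₁ v (z j))) _ (Finset.measurable_sum _ fun j _ =>
            ((mH.mul hg₁_meas.ennreal_ofReal).mul (mf₁ (z j)).ennreal_ofReal)),
            lintegral_finset_sum (f := fun j v => H v * ENNReal.ofReal (g₁ v)
              * ENNReal.ofReal (f₁ v (z j))) _ fun j _ =>
            ((mH.mul hg₁_meas.ennreal_ofReal).mul (mf₁ (z j)).ennreal_ofReal)]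
  have step3 : (∫⁻ z : Fin M → (Fin d → ℝ),
      (((M:ℕ):ℝ≥0∞)⁻¹ * ∑ j, L (z j)) * ∏ j, ENNReal.ofReal (p₀ (z j)))
      = ∫⁻ ζ, L ζ * ENNReal.ofReal (p₀ ζ) := by
    have m1 : ∀ j : Fin M, Measurable fun z : Fin M → (Fin d → ℝ) =>
        L (z j) * ∏ i, ENNReal.ofReal (p₀ (z i)) :=
      fun j => (mL.comp (measurable_pi_apply j)).mul
        (Finset.measurable_prod _ fun i _ =>
          (hp₀_meas.comp (measurable_pi_apply i)).ennreal_ofReal)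
    simp_rw [mul_assoc, Finset.sum_mul]
    rw [lintegral_const_mul _ (Finset.measurable_sum _ fun j _ => m1 j),
      lintegral_finset_sum _ fun j _ => m1 j]
    have each : ∀ j : Fin M, (∫⁻ z : Fin M → (Fin d → ℝ),
        L (z j) * ∏ i, ENNReal.ofReal (p₀ (z i)))
        = ∫⁻ ζ, L ζ * ENNReal.ofReal (p₀ ζ) :=
      fun j => lintegral_vol_pi_coord M (fun v => ENNReal.ofReal (p₀ v)) L
        hp₀_meas.ennreal_ofReal mL hp₀one j
    rw [Finset.sum_congr rfl fun j _ => each j, Finset.sum_const, Finset.card_univ,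
      Fintype.card_fin, nsmul_eq_mul, ← mul_assoc, ENNReal.inv_mul_cancel hMne hMtop, one_mul]
  have step4 : (∫⁻ x, ∫⁻ x', ∫⁻ z, ENNReal.ofReal
      (g₂ x * f₂ x x' * g₁ x' * f₁ x' z * p₀ z))
      = ∫⁻ ζ, L ζ * ENNReal.ofReal (p₀ ζ) := by
    symm
    set C : (Fin d → ℝ) → ℝ≥0∞ :=
      fun w => ∫⁻ ζ, ENNReal.ofReal (f₁ w ζ) * ENNReal.ofReal (p₀ ζ) with hC
    have mC : Measurable C := by
      apply Measurable.lintegral_prod_right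
        (f := fun w ζ => ENNReal.ofReal (f₁ w ζ) * ENNReal.ofReal (p₀ ζ))
      exact (hf₁_meas.ennreal_ofReal).mul ((hp₀_meas.comp measurable_snd).ennreal_ofReal)
    have mfp : ∀ w, Measurable fun ζ => ENNReal.ofReal (f₁ w ζ) * ENNReal.ofReal (p₀ ζ) :=
      fun w => ((mf₁' w).ennreal_ofReal).mul hp₀_meas.ennreal_ofReal
    calc ∫⁻ ζ, L ζ * ENNReal.ofReal (p₀ ζ)
        = ∫⁻ ζ, ∫⁻ w, (H w * ENNReal.ofReal (g₁ w) * ENNReal.ofReal (f₁ w ζ))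
            * ENNReal.ofReal (p₀ ζ) := by
          refine lintegral_congr fun ζ => ?_
          exact (lintegral_mul_const _
            ((mH.mul hg₁_meas.ennreal_ofReal).mul (mf₁ ζ).ennreal_ofReal)).symm
      _ = ∫⁻ w, ∫⁻ ζ, (H w * ENNReal.ofReal (g₁ w) * ENNReal.ofReal (f₁ w ζ))
            * ENNReal.ofReal (p₀ ζ) := by
          apply lintegral_lintegral_swap
          apply Measurable.aemeasurable
          exact (((mH.comp measurable_snd).mul
            ((hg₁_meas.comp measurable_snd).ennreal_ofReal)).mul
            ((hf₁_meas.comp (measurable_snd.prodMk measurable_fst)).ennreal_ofReal)).mul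
            ((hp₀_meas.comp measurable_fst).ennreal_ofReal)
      _ = ∫⁻ w, (H w * ENNReal.ofReal (g₁ w)) * C w := by
          refine lintegral_congr fun w => ?_
          rw [hC]
          rw [← lintegral_const_mul _ (mfp w)]
          exact lintegral_congr fun ζ => by ring
      _ = ∫⁻ w, ∫⁻ v, (ENNReal.ofReal (g₂ v) * ENNReal.ofReal (f₂ v w))
            * (ENNReal.ofReal (g₁ w) * C w) := by
          refine lintegral_congr fun w => ?_
          rw [mul_assoc, hH]
          exact (lintegral_mul_const _
            (hg₂_meas.ennreal_ofReal.mul (mf₂ w).ennreal_ofReal)).symm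
      _ = ∫⁻ v, ∫⁻ w, (ENNReal.ofReal (g₂ v) * ENNReal.ofReal (f₂ v w))
            * (ENNReal.ofReal (g₁ w) * C w) := by
          apply lintegral_lintegral_swap
          apply Measurable.aemeasurable
          exact (((hg₂_meas.comp measurable_snd).ennreal_ofReal).mul
            ((hf₂_meas.comp (measurable_snd.prodMk measurable_fst)).ennreal_ofReal)).mul
            (((hg₁_meas.comp measurable_fst).ennreal_ofReal).mul (mC.comp measurable_fst))
      _ = ∫⁻ v, ∫⁻ w, ∫⁻ ζ, ENNReal.ofReal (g₂ v * f₂ v w * g₁ w * f₁ w ζ * p₀ ζ) := by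
          refine lintegral_congr fun v => lintegral_congr fun w => ?_
          rw [hC, show ∀ X : ℝ≥0∞, (ENNReal.ofReal (g₂ v) * ENNReal.ofReal (f₂ v w))
              * (ENNReal.ofReal (g₁ w) * X)
              = (ENNReal.ofReal (g₂ v) * ENNReal.ofReal (f₂ v w) * ENNReal.ofReal (g₁ w)) * X
            from fun X => by ring, ← lintegral_const_mul _ (mfp w)]
          refine lintegral_congr fun ζ => ?_
          have h1 : 0 ≤ g₂ v * f₂ v w := mul_nonneg (hg₂_nonneg v) (hf₂_nonneg v w)
          have h2 : 0 ≤ g₂ v * f₂ v w * g₁ w := mul_nonneg h1 (hg₁_nonneg w)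
          have h3 : 0 ≤ g₂ v * f₂ v w * g₁ w * f₁ w ζ := mul_nonneg h2 (hf₁_nonneg w ζ)
          rw [ENNReal.ofReal_mul h3, ENNReal.ofReal_mul h2, ENNReal.ofReal_mul h1,
            ENNReal.ofReal_mul (hg₂_nonneg v)]
          ring
  have main : (∫⁻ z : Fin M → (Fin d → ℝ),
        (∫⁻ u : Fin M → (Fin d → ℝ),
            (∫⁻ x : Fin M → (Fin d → ℝ),
                ENNReal.ofReal (Z₁ z u) * ENNReal.ofReal (Z₂ z u x)
                  * ∏ m, ENNReal.ofReal (Ψ₂ z u (x m)))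
              * ∏ m, ENNReal.ofReal (Ψ₁ z (u m)))
          * ∏ j, ENNReal.ofReal (p₀ (z j)))
      = ∫⁻ ζ, L ζ * ENNReal.ofReal (p₀ ζ) := by
    rw [← step3]
    refine lintegral_congr fun z => ?_
    congr 1
    rw [← step2 z]
    refine lintegral_congr fun u => ?_
    congr 1
    exact step1 z u
  rw [main, step4]
end

section
/- (Lemma 3, integral form: the OAPF marginal importance weight has mean equal to, and second moment at most, those of the extended-space APF weight.) With the setup below, the following hold as identities/inequalities of Lebesgue integrals in [0,∞]: (i) ∫_{ℝ^d} w(x) ψ(x) dx = Σ_{k=1}^K λ_k ∫_{ℝ^d} v_k(x) q_k(x) dx (both sides equal ∫ Σ_k a_k); and (ii) ∫_{ℝ^d} w(x)² ψ(x) dx ≤ Σ_{k=1}^K λ_k ∫_{ℝ^d} v_k(x)² q_k(x) dx. Consequently, when the second moments are finite, the variance of the OAPF marginal weight w under ψ is at most the variance of the APF extended-space weight v (with index k drawn with probability λ_k and the point drawn from q_k). -/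
open MeasureTheory

/-- **Lemma 3 (integral form).**  The OAPF marginal importance weight
`w = (∑ₖ aₖ)/ψ` has, under the mixture `ψ = ∑ₖ λₖ qₖ`, mean equal to — and second
moment at most — those of the extended-space APF weight `vₖ = aₖ/(λₖ qₖ)` (index
`k` drawn with probability `λₖ`, point drawn from `qₖ`):
(i) `∫ w ψ = ∑ₖ λₖ ∫ vₖ qₖ` (both sides equal `∫ ∑ₖ aₖ`), and
(ii) `∫ w² ψ ≤ ∑ₖ λₖ ∫ vₖ² qₖ`, as identities/inequalities in `[0,∞]`. -/
theorem oapf_weight_mean_and_second_moment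
    (d K : ℕ) (hd : 1 ≤ d) (hK : 1 ≤ K)
    (q : Fin K → (Fin d → ℝ) → ℝ) (hq_meas : ∀ k, Measurable (q k))
    (hq_pos : ∀ k x, 0 < q k x) (hq_int : ∀ k, ∫ x, q k x = 1)
    (lam : Fin K → ℝ) (hlam_pos : ∀ k, 0 < lam k) (hlam_sum : ∑ k, lam k = 1)
    (a : Fin K → (Fin d → ℝ) → ℝ) (ha_meas : ∀ k, Measurable (a k))
    (ha_nonneg : ∀ k x, 0 ≤ a k x)
    (ψ : (Fin d → ℝ) → ℝ) (hψ : ψ = fun x => ∑ k, lam k * q k x)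
    (w : (Fin d → ℝ) → ℝ) (hw : w = fun x => (∑ k, a k x) / ψ x)
    (v : Fin K → (Fin d → ℝ) → ℝ)
    (hv : v = fun k x => a k x / (lam k * q k x)) :
    ((∫⁻ x, ENNReal.ofReal (w x * ψ x))
        = ∑ k, ENNReal.ofReal (lam k) * ∫⁻ x, ENNReal.ofReal (v k x * q k x))
      ∧ ((∫⁻ x, ENNReal.ofReal (w x * ψ x))
        = ∫⁻ x, ENNReal.ofReal (∑ k, a k x))
      ∧ ((∫⁻ x, ENNReal.ofReal ((w x) ^ 2 * ψ x))
        ≤ ∑ k, ENNReal.ofReal (lam k)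
            * ∫⁻ x, ENNReal.ofReal ((v k x) ^ 2 * q k x)) := by
  subst hψ hw hv
  have hK' : Nonempty (Fin K) := ⟨⟨0, hK⟩⟩
  have hψpos : ∀ x : Fin d → ℝ, 0 < ∑ k, lam k * q k x := fun x =>
    Finset.sum_pos (fun k _ => mul_pos (hlam_pos k) (hq_pos k x)) ⟨Classical.arbitrary _, Finset.mem_univ _⟩
  -- pointwise identity for the mean
  have hmean : ∀ x : Fin d → ℝ,
      (∑ k, a k x) / (∑ k, lam k * q k x) * (∑ k, lam k * q k x) = ∑ k, a k x := by
    intro x; exact div_mul_cancel₀ _ (hψpos x).ne'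
  -- each term on RHS of (i) equals ∫ a k
  have hterm : ∀ k, ENNReal.ofReal (lam k)
      * ∫⁻ x, ENNReal.ofReal (a k x / (lam k * q k x) * q k x)
      = ∫⁻ x, ENNReal.ofReal (a k x) := by
    intro k
    rw [← lintegral_const_mul' _ _ ENNReal.ofReal_ne_top]
    refine lintegral_congr fun x => ?_
    rw [← ENNReal.ofReal_mul (hlam_pos k).le]
    congr 1
    have hq := (hq_pos k x).ne'
    have hl := (hlam_pos k).ne'
    field_simp
  have hsum_eq : (∫⁻ x, ENNReal.ofReal (∑ k, a k x))
      = ∑ k, ∫⁻ x, ENNReal.ofReal (a k x) := by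
    rw [← lintegral_finset_sum _ (fun k _ => (ha_meas k).ennreal_ofReal)]
    refine lintegral_congr fun x => ?_
    exact ENNReal.ofReal_sum_of_nonneg (fun k _ => ha_nonneg k x)
  have hLHS : (∫⁻ x, ENNReal.ofReal
      ((∑ k, a k x) / (∑ k, lam k * q k x) * (∑ k, lam k * q k x)))
      = ∫⁻ x, ENNReal.ofReal (∑ k, a k x) :=
    lintegral_congr fun x => by rw [hmean x]
  refine ⟨?_, hLHS, ?_⟩
  · rw [hLHS, hsum_eq]
    exact Finset.sum_congr rfl fun k _ => (hterm k).symm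
  · -- second moment
    have hRHSterm : ∀ k, ENNReal.ofReal (lam k)
        * ∫⁻ x, ENNReal.ofReal ((a k x / (lam k * q k x)) ^ 2 * q k x)
        = ∫⁻ x, ENNReal.ofReal ((a k x) ^ 2 / (lam k * q k x)) := by
      intro k
      rw [← lintegral_const_mul' _ _ ENNReal.ofReal_ne_top]
      refine lintegral_congr fun x => ?_
      rw [← ENNReal.ofReal_mul (hlam_pos k).le]
      congr 1
      have hq := (hq_pos k x).ne'
      have hl := (hlam_pos k).ne'
      field_simp
    have hmeas2 : ∀ k ∈ Finset.univ, Measurable fun x : Fin d → ℝ =>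
        ENNReal.ofReal ((a k x) ^ 2 / (lam k * q k x)) := fun k _ =>
      ENNReal.measurable_ofReal.comp (((ha_meas k).pow_const 2).div
        ((measurable_const.mul (hq_meas k))))
    calc (∫⁻ x, ENNReal.ofReal
          (((∑ k, a k x) / (∑ k, lam k * q k x)) ^ 2 * (∑ k, lam k * q k x)))
        ≤ ∫⁻ x, ENNReal.ofReal (∑ k, (a k x) ^ 2 / (lam k * q k x)) := by
          refine lintegral_mono fun x => ENNReal.ofReal_le_ofReal ?_
          have hx := hψpos x
          have : ((∑ k, a k x) / (∑ k, lam k * q k x)) ^ 2 * (∑ k, lam k * q k x)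
              = (∑ k, a k x) ^ 2 / (∑ k, lam k * q k x) := by
            rw [div_pow]
            rw [pow_two (∑ k, lam k * q k x)]
            field_simp
          rw [this]
          exact Finset.sq_sum_div_le_sum_sq_div _ _
            (fun k _ => mul_pos (hlam_pos k) (hq_pos k x))
      _ = ∑ k, ∫⁻ x, ENNReal.ofReal ((a k x) ^ 2 / (lam k * q k x)) := by
          rw [← lintegral_finset_sum _ hmeas2]
          refine lintegral_congr fun x => ?_
          exact ENNReal.ofReal_sum_of_nonneg
            (fun k _ => div_nonneg (sq_nonneg _) (mul_pos (hlam_pos k) (hq_pos k x)).le)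
      _ = _ := Finset.sum_congr rfl fun k _ => (hRHSterm k).symm
end

section
/- (Rao–Blackwellization identity underlying Lemma 3: marginalizing the auxiliary variable.) Let μ be the probability measure on (Fin K) × ℝ^d given by μ := Σ_{k=1}^K λ_k · (pushforward under x ↦ (k, x) of the measure with density q_k with respect to Lebesgue measure), and define V : (Fin K) × ℝ^d → ℝ by V(k, x) := v_k(x) = a_k(x)/(λ_k q_k(x)). Assume Σ_{k=1}^K ∫ a_k(x) dx < ∞ (so that V is μ-integrable). Then the conditional expectation of V given the σ-algebra generated by the second coordinate satisfies, μ-a.e., E[V | σ(snd)](k, x) = w(x) = (Σ_{j=1}^K a_j(x)) / ψ(x). -/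
open MeasureTheory
open ENNReal NNReal

private lemma restrict_finset_sum_aux {α ι : Type*} [MeasurableSpace α] (s : Finset ι)
    (μ : ι → Measure α) (t : Set α) :
    (∑ i ∈ s, μ i).restrict t = ∑ i ∈ s, (μ i).restrict t := by
  classical
  induction s using Finset.induction with
  | empty => simp
  | @insert a s h ih => simp [Finset.sum_insert h, Measure.restrict_add, ih]

/-- **Rao–Blackwellization identity underlying Lemma 3.**  Let `μ` be the law of
the APF extended-space sampling scheme on `(Fin K) × ℝ^d`: draw an auxiliary index
`k` with probability `λₖ`, then a point from `qₖ`.  If `∑ₖ ∫ aₖ < ∞`, then the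
conditional expectation of the extended-space weight `V(k,x) = aₖ(x)/(λₖ qₖ(x))`
given the second coordinate is the marginal OAPF weight `w(x) = (∑ⱼ aⱼ(x))/ψ(x)`,
`μ`-a.e. -/
theorem apf_weight_rao_blackwell
    (d K : ℕ) (hd : 1 ≤ d) (hK : 1 ≤ K)
    (q : Fin K → (Fin d → ℝ) → ℝ) (hq_meas : ∀ k, Measurable (q k))
    (hq_pos : ∀ k x, 0 < q k x) (hq_int : ∀ k, ∫ x, q k x = 1)
    (lam : Fin K → ℝ) (hlam_pos : ∀ k, 0 < lam k) (hlam_sum : ∑ k, lam k = 1)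
    (a : Fin K → (Fin d → ℝ) → ℝ) (ha_meas : ∀ k, Measurable (a k))
    (ha_nonneg : ∀ k x, 0 ≤ a k x)
    (ha_int : (∑ k, ∫⁻ x, ENNReal.ofReal (a k x)) < ⊤)
    (ψ : (Fin d → ℝ) → ℝ) (hψ : ψ = fun x => ∑ k, lam k * q k x)
    (w : (Fin d → ℝ) → ℝ) (hw : w = fun x => (∑ j, a j x) / ψ x)
    (v : Fin K → (Fin d → ℝ) → ℝ)
    (hv : v = fun k x => a k x / (lam k * q k x))
    (μ : Measure ((Fin K) × (Fin d → ℝ)))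
    (hμ : μ = ∑ k, ENNReal.ofReal (lam k)
      • Measure.map (fun x => (k, x))
          (volume.withDensity (fun x => ENNReal.ofReal (q k x))))
    (V : (Fin K) × (Fin d → ℝ) → ℝ) (hV : V = fun p => v p.1 p.2) :
    μ[V | MeasurableSpace.comap Prod.snd inferInstance]
      =ᵐ[μ] fun p => w p.2 := by
  haveI : Nonempty (Fin K) := ⟨⟨0, hK⟩⟩
  have hm : MeasurableSpace.comap (Prod.snd : (Fin K) × (Fin d → ℝ) → _) inferInstance
      ≤ (inferInstance : MeasurableSpace ((Fin K) × (Fin d → ℝ))) := measurable_iff_comap_le.mp measurable_snd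
  -- basic positivity
  have hψ_pos : ∀ x, 0 < ψ x := by
    intro x; rw [hψ]
    exact Finset.sum_pos (fun i _ => mul_pos (hlam_pos i) (hq_pos i x)) Finset.univ_nonempty
  -- integrability of a k
  have ha_int' : ∀ k, Integrable (a k) := by
    intro k
    refine ⟨(ha_meas k).aestronglyMeasurable, ?_⟩
    rw [hasFiniteIntegral_iff_ofReal (Filter.Eventually.of_forall (ha_nonneg k))]
    exact (Finset.single_le_sum (f := fun k => ∫⁻ x, ENNReal.ofReal (a k x))
      (fun i _ => zero_le) (Finset.mem_univ k)).trans_lt ha_int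
  have hA_int : Integrable (fun x => ∑ j, a j x) :=
    integrable_finset_sum _ (fun k _ => ha_int' k)
  have hq_int' : ∀ k, Integrable (q k) := by
    intro k; by_contra h
    have := hq_int k
    rw [integral_undef h] at this
    norm_num at this
  -- measurability
  have hVm : Measurable V := by
    rw [hV, hv]
    have : Measurable (fun p : (Fin d → ℝ) × Fin K => a p.2 p.1 / (lam p.2 * q p.2 p.1)) :=
      measurable_from_prod_countable_left
        (fun k => (ha_meas k).div ((measurable_const (a := lam k)).mul (hq_meas k)))
    exact this.comp measurable_swap
  have hwm : Measurable w := by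
    rw [hw, hψ]
    exact (Finset.measurable_sum _ fun j _ => ha_meas j).div
      (Finset.measurable_sum _ fun k _ => measurable_const.mul (hq_meas k))
  -- the key integral computation on each component measure
  have hkey : ∀ (k : Fin K) (B : Set (Fin d → ℝ)), MeasurableSet B →
      ∀ (f : Fin K × (Fin d → ℝ) → ℝ), Measurable f →
      ∫ p in Prod.snd ⁻¹' B, f p
          ∂(Measure.map (fun x => (k, x))
            (volume.withDensity fun x => ENNReal.ofReal (q k x)))
        = ∫ x in B, q k x * f (k, x) := by
    intro k B hB f hf
    rw [Measure.restrict_map measurable_prodMk_left (measurable_snd hB)]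
    have hpre : (fun x => (k, x)) ⁻¹' (Prod.snd ⁻¹' B) = B := by ext x; simp
    rw [hpre, integral_map measurable_prodMk_left.aemeasurable hf.aestronglyMeasurable]
    have hden : (fun x => ENNReal.ofReal (q k x))
        = fun x => ((q k x).toNNReal : ℝ≥0∞) := rfl
    rw [hden, setIntegral_withDensity_eq_setIntegral_smul
      (hq_meas k).real_toNNReal _ hB]
    refine setIntegral_congr_fun hB fun x _ => ?_
    simp [NNReal.smul_def, Real.coe_toNNReal _ (hq_pos k x).le]
  -- integrability transfer
  have hintkey : ∀ (k : Fin K) (f : Fin K × (Fin d → ℝ) → ℝ), Measurable f →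
      Integrable (fun x => q k x * f (k, x)) volume →
      Integrable f (Measure.map (fun x => (k, x))
        (volume.withDensity fun x => ENNReal.ofReal (q k x))) := by
    intro k f hf hint
    rw [integrable_map_measure hf.aestronglyMeasurable measurable_prodMk_left.aemeasurable]
    have hden : (fun x : Fin d → ℝ => ENNReal.ofReal (q k x))
        = fun x => ((q k x).toNNReal : ℝ≥0∞) := rfl
    rw [hden, integrable_withDensity_iff_integrable_smul (hq_meas k).real_toNNReal]
    refine hint.congr (Filter.Eventually.of_forall fun x => ?_)
    simp [NNReal.smul_def, Real.coe_toNNReal _ (hq_pos k x).le]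
  have hc0 : ∀ k, ENNReal.ofReal (lam k) ≠ 0 := fun k => by
    simpa [ENNReal.ofReal_eq_zero] using not_le.mpr (hlam_pos k)
  -- pointwise simplification for V
  have hVptw : ∀ k x, q k x * V (k, x) = a k x / lam k := by
    intro k x
    rw [hV, hv]
    have h1 := (hq_pos k x).ne'
    have h2 := (hlam_pos k).ne'
    field_simp
  have hV_int_comp : ∀ k, Integrable V (Measure.map (fun x => (k, x))
      (volume.withDensity fun x => ENNReal.ofReal (q k x))) := by
    intro k
    refine hintkey k V hVm ?_
    exact ((ha_int' k).div_const (lam k)).congr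
      (Filter.Eventually.of_forall fun x => (hVptw k x).symm)
  have hV_int : Integrable V μ := by
    rw [hμ, integrable_finset_sum_measure]
    intro k _
    exact (integrable_smul_measure (hc0 k) ENNReal.ofReal_ne_top).mpr (hV_int_comp k)
  have hw_nonneg : ∀ x, 0 ≤ w x := by
    intro x; rw [hw]
    exact div_nonneg (Finset.sum_nonneg fun j _ => ha_nonneg j x) (hψ_pos x).le
  have hlamq_le : ∀ k x, lam k * q k x ≤ ψ x := by
    intro k x; rw [hψ]
    exact Finset.single_le_sum (f := fun i => lam i * q i x)
      (fun i _ => (mul_nonneg (hlam_pos i).le (hq_pos i x).le)) (Finset.mem_univ k)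
  have hqw_int : ∀ k, Integrable (fun x => q k x * w x) := by
    intro k
    refine (hA_int.div_const (lam k)).mono ((hq_meas k).mul hwm).aestronglyMeasurable
      (Filter.Eventually.of_forall fun x => ?_)
    rw [Real.norm_eq_abs, Real.norm_eq_abs,
      abs_of_nonneg (mul_nonneg (hq_pos k x).le (hw_nonneg x)),
      abs_of_nonneg (div_nonneg (Finset.sum_nonneg fun j _ => ha_nonneg j x) (hlam_pos k).le)]
    rw [hw, mul_div_assoc', div_le_div_iff₀ (hψ_pos x) (hlam_pos k)]
    have h1 := hlamq_le k x
    have h2 : 0 ≤ ∑ j, a j x := Finset.sum_nonneg fun j _ => ha_nonneg j x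
    nlinarith
  have hg_int_comp : ∀ k, Integrable (fun p : Fin K × (Fin d → ℝ) => w p.2)
      (Measure.map (fun x => (k, x))
        (volume.withDensity fun x => ENNReal.ofReal (q k x))) := by
    intro k
    exact hintkey k _ (hwm.comp measurable_snd) (hqw_int k)
  have hg_int : Integrable (fun p : Fin K × (Fin d → ℝ) => w p.2) μ := by
    rw [hμ, integrable_finset_sum_measure]
    intro k _
    exact (integrable_smul_measure (hc0 k) ENNReal.ofReal_ne_top).mpr (hg_int_comp k)
  -- μ is a finite (indeed probability) measure
  have hνuniv : ∀ k, (volume.withDensity fun x => ENNReal.ofReal (q k x)) Set.univ = 1 := by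
    intro k
    rw [withDensity_apply _ MeasurableSet.univ, Measure.restrict_univ,
      ← ofReal_integral_eq_lintegral_ofReal (hq_int' k)
        (Filter.Eventually.of_forall fun x => (hq_pos k x).le), hq_int k, ENNReal.ofReal_one]
  haveI : IsFiniteMeasure μ := by
    constructor
    rw [hμ, Measure.finset_sum_apply]
    have hterm : ∀ k : Fin K, (ENNReal.ofReal (lam k) • Measure.map (fun x => (k, x))
        (volume.withDensity fun x => ENNReal.ofReal (q k x))) Set.univ
          = ENNReal.ofReal (lam k) := by
      intro k
      rw [Measure.smul_apply, Measure.map_apply measurable_prodMk_left MeasurableSet.univ,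
        Set.preimage_univ, hνuniv k, smul_eq_mul, mul_one]
    simp only [hterm]
    exact ENNReal.sum_lt_top.mpr fun k _ => ENNReal.ofReal_lt_top
  haveI : SigmaFinite (μ.trim hm) := inferInstance
  -- set-integral computation over sets of the form snd⁻¹ B
  have hmain : ∀ (B : Set (Fin d → ℝ)), MeasurableSet B →
      ∀ (f : Fin K × (Fin d → ℝ) → ℝ), Measurable f →
      (∀ k, Integrable f ((Measure.map (fun x => (k, x))
        (volume.withDensity fun x => ENNReal.ofReal (q k x))))) →
      ∫ p in Prod.snd ⁻¹' B, f p ∂μ = ∑ k, lam k * ∫ x in B, q k x * f (k, x) := by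
    intro B hB f hf hfint
    rw [hμ, restrict_finset_sum_aux, integral_finset_sum_measure ?hint]
    case hint =>
      intro k _
      rw [Measure.restrict_smul]
      exact (integrable_smul_measure (hc0 k) ENNReal.ofReal_ne_top).mpr
        (hfint k).integrableOn
    refine Finset.sum_congr rfl fun k _ => ?_
    rw [Measure.restrict_smul, integral_smul_measure, ENNReal.toReal_ofReal (hlam_pos k).le,
      hkey k B hB f hf, smul_eq_mul]
  have heval : ∀ (B : Set (Fin d → ℝ)), MeasurableSet B →
      ∫ p in Prod.snd ⁻¹' B, w p.2 ∂μ = ∫ p in Prod.snd ⁻¹' B, V p ∂μ := by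
    intro B hB
    have hgm' : Measurable (fun p : Fin K × (Fin d → ℝ) => w p.2) := hwm.comp measurable_snd
    rw [hmain B hB (fun p => w p.2) hgm' hg_int_comp,
        hmain B hB V hVm hV_int_comp]
    have h1 : ∀ k : Fin K, lam k * ∫ x in B, q k x * V (k, x) = ∫ x in B, a k x := by
      intro k
      rw [setIntegral_congr_fun hB (fun x _ => hVptw k x), integral_div,
        mul_comm, div_mul_cancel₀ _ (hlam_pos k).ne']
    have h2 : ∀ k : Fin K, lam k * ∫ x in B, q k x * w x
        = ∫ x in B, lam k * (q k x * w x) := fun k => (integral_const_mul _ _).symm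
    simp only [h1, h2]
    rw [← integral_finset_sum _ fun k _ => ((hqw_int k).const_mul (lam k)).integrableOn,
      ← integral_finset_sum _ fun k _ => (ha_int' k).integrableOn]
    refine setIntegral_congr_fun hB fun x _ => ?_
    simp_rw [← mul_assoc, ← Finset.sum_mul]
    have hψx : (∑ k, lam k * q k x) = ψ x := by rw [hψ]
    rw [hψx, hw, mul_comm, div_mul_cancel₀ _ (hψ_pos x).ne']
  refine (ae_eq_condExp_of_forall_setIntegral_eq hm hV_int
    (fun s _ _ => hg_int.integrableOn) (fun s hs _ => ?_) ?_).symm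
  · obtain ⟨B, hB, rfl⟩ := hs
    exact heval B hB
  · have hsnd : Measurable[MeasurableSpace.comap Prod.snd inferInstance]
        (Prod.snd : (Fin K) × (Fin d → ℝ) → (Fin d → ℝ)) :=
      measurable_iff_comap_le.mpr le_rfl
    exact ((hwm.comp hsnd).stronglyMeasurable).aestronglyMeasurable
end
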